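/- arXiv:1702.03619 — 7 statements merged into one kernel-verified Lean document; each statement's English description precedes it below -/
import Mathlib

section
/- Let ω_{11}, ω_{12}, ω_{21}, ω_{22} be real numbers such that τ := ω_{11} + ω_{22} − ω_{12} − ω_{21} is not in 2πℤ. For complex numbers f_1, f_2 not both zero, define u_1 = (exp(iω_{11}) f_1 + exp(iω_{12}) f_2)/2 and u_2 = (exp(iω_{21}) f_1 + exp(iω_{22}) f_2)/2. Then |u_1|² + |u_2|² < |f_1|² + |f_2|². -/
/-!
Write `p₁ = e^{iω₁₁} f₁`, `q₁ = e^{iω₁₂} f₂`, `p₂ = e^{iω₂₁} f₁`, `q₂ = e^{iω₂₂} f₂`. By the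
parallelogram law `‖(p + q)/2‖² = (‖p‖² + ‖q‖²)/2 - ‖(p - q)/2‖²`, so the left-hand side
is `‖f₁‖² + ‖f₂‖² - ‖(p₁ - q₁)/2‖² - ‖(p₂ - q₂)/2‖²`. Equality would force `p₁ = q₁` and `p₂ = q₂`;
multiplying these gives `e^{i(ω₁₁ + ω₂₂)} f₁ f₂ = e^{i(ω₁₂ + ω₂₁)} f₁ f₂` with `f₁ f₂ ≠ 0`,
so `e^{iτ} = 1`, i.e. `τ ∈ 2πℤ`.
-/

open Complex

theorem RCLike.norm_half_add_sq_add_norm_half_sub_sq {𝕜 : Type*} [RCLike 𝕜] (p q : 𝕜) :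
    ‖(p + q) / 2‖ ^ 2 + ‖(p - q) / 2‖ ^ 2 = (‖p‖ ^ 2 + ‖q‖ ^ 2) / 2 := by
  have h := parallelogram_law_with_norm 𝕜 p q
  simp only [norm_div, RCLike.norm_ofNat]
  nlinarith

theorem Complex.exists_int_sub_eq_two_pi_mul_of_exp_mul_I_eq {a b : ℝ}
    (h : exp (a * I) = exp (b * I)) : ∃ n : ℤ, a - b = 2 * Real.pi * n := by
  obtain ⟨n, hn⟩ := exp_eq_exp_iff_exists_int.mp h
  have him : a = b + n * (2 * Real.pi) := by simpa using congrArg im hn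
  exact ⟨n, by linarith⟩

theorem Complex.exists_int_eq_two_pi_mul_of_exp_mul_I_mul_eq {ω₁₁ ω₁₂ ω₂₁ ω₂₂ : ℝ} {f₁ f₂ : ℂ}
    (hf : ¬ (f₁ = 0 ∧ f₂ = 0))
    (h₁ : exp (ω₁₁ * I) * f₁ = exp (ω₁₂ * I) * f₂)
    (h₂ : exp (ω₂₁ * I) * f₁ = exp (ω₂₂ * I) * f₂) :
    ∃ n : ℤ, ω₁₁ + ω₂₂ - ω₁₂ - ω₂₁ = 2 * Real.pi * n := by
  have hf₁ : f₁ ≠ 0 := by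
    rintro rfl
    exact hf ⟨rfl, by simpa [exp_ne_zero] using h₁.symm⟩
  have hf₂ : f₂ ≠ 0 := by
    rintro rfl
    exact hf ⟨by simpa [exp_ne_zero] using h₁, rfl⟩
  have hexp : exp ((ω₁₁ + ω₂₂ : ℝ) * I) = exp ((ω₁₂ + ω₂₁ : ℝ) * I) := by
    apply mul_right_cancel₀ (mul_ne_zero hf₁ hf₂)
    push_cast
    rw [add_mul, add_mul, exp_add, exp_add]
    linear_combination exp (ω₂₂ * I) * f₂ * h₁ - exp (ω₁₂ * I) * f₂ * h₂
  obtain ⟨n, hn⟩ := exists_int_sub_eq_two_pi_mul_of_exp_mul_I_eq hexp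
  exact ⟨n, by linarith⟩

theorem stmt0 (ω₁₁ ω₁₂ ω₂₁ ω₂₂ : ℝ)
    (hτ : ¬ ∃ n : ℤ, ω₁₁ + ω₂₂ - ω₁₂ - ω₂₁ = 2 * Real.pi * n)
    (f₁ f₂ : ℂ) (hf : ¬ (f₁ = 0 ∧ f₂ = 0)) :
    ‖(Complex.exp (ω₁₁ * Complex.I) * f₁ +
        Complex.exp (ω₁₂ * Complex.I) * f₂) / 2‖ ^ 2
      + ‖(Complex.exp (ω₂₁ * Complex.I) * f₁ +
        Complex.exp (ω₂₂ * Complex.I) * f₂) / 2‖ ^ 2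
      < ‖f₁‖ ^ 2 + ‖f₂‖ ^ 2 := by
  set p₁ := exp (ω₁₁ * I) * f₁
  set q₁ := exp (ω₁₂ * I) * f₂
  set p₂ := exp (ω₂₁ * I) * f₁
  set q₂ := exp (ω₂₂ * I) * f₂
  have hne : p₁ ≠ q₁ ∨ p₂ ≠ q₂ := by
    by_contra! h
    exact hτ (exists_int_eq_two_pi_mul_of_exp_mul_I_mul_eq hf h.1 h.2)
  have hdefect : 0 < ‖(p₁ - q₁) / 2‖ ^ 2 + ‖(p₂ - q₂) / 2‖ ^ 2 := by
    rcases hne with h | h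
    · have := norm_pos_iff.2 (div_ne_zero (sub_ne_zero.2 h) two_ne_zero)
      positivity
    · have := norm_pos_iff.2 (div_ne_zero (sub_ne_zero.2 h) two_ne_zero)
      positivity
  have e₁ := RCLike.norm_half_add_sq_add_norm_half_sub_sq p₁ q₁
  have e₂ := RCLike.norm_half_add_sq_add_norm_half_sub_sq p₂ q₂
  simp only [p₁, q₁, p₂, q₂, norm_mul, norm_exp_ofReal_mul_I, one_mul] at e₁ e₂
  linarith
end

section
/- Let I' ⊂ I be compact intervals with |I'| ≤ |I|/4, let θ > 0, ψ ∈ C^∞(I; ℝ) with 4θ|I'|·sup_{I'}|ψ'| ≤ 1, and f ∈ C¹(I). Then θ|I'|·sup_{I'}|(e^{iψ} f)'| ≤ ‖f‖_{C_θ(I)}/2 and ‖e^{iψ} f‖_{C_θ(I')} ≤ ‖f‖_{C_θ(I)}, where ‖g‖_{C_θ(J)} := max(sup_J |g|, θ|J|·sup_J |g'|). -/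
/-- The norm `‖f‖_{C_θ(I)} = max(sup_I |f|, θ|I| sup_I |f'|)` on `I = [a,b]`. -/
noncomputable def Cnorm (θ a b : ℝ) (f : ℝ → ℂ) : ℝ :=
  max (⨆ x : Set.Icc a b, ‖f (x : ℝ)‖)
    (θ * (b - a) * ⨆ x : Set.Icc a b, ‖deriv f (x : ℝ)‖)

lemma bdd_range_aux {c d : ℝ} {h : ℝ → ℝ} (hc : ContinuousOn h (Set.Icc c d)) :
    BddAbove (Set.range fun x : Set.Icc c d => h (x : ℝ)) := by
  rw [show (fun x : Set.Icc c d => h (x : ℝ)) = (Set.Icc c d).domRestrict h from rfl,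
    Set.range_domRestrict]
  exact (isCompact_Icc.image_of_continuousOn hc).bddAbove

theorem stmt8 (a b a' b' θ : ℝ) (hab : a < b) (ha'b' : a' < b')
    (hsub : Set.Icc a' b' ⊆ Set.Icc a b) (hquarter : b' - a' ≤ (b - a) / 4)
    (hθ : 0 < θ) (ψ : ℝ → ℝ) (hψ : ContDiff ℝ (⊤ : ℕ∞) ψ)
    (hψ' : 4 * θ * (b' - a') * (⨆ x : Set.Icc a' b', |deriv ψ (x : ℝ)|) ≤ 1)
    (f : ℝ → ℂ) (hf : ContDiff ℝ 1 f) :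
    θ * (b' - a') *
        (⨆ x : Set.Icc a' b',
          ‖deriv (fun t => Complex.exp (ψ t * Complex.I) * f t) (x : ℝ)‖)
      ≤ Cnorm θ a b f / 2 ∧
    Cnorm θ a' b' (fun t => Complex.exp (ψ t * Complex.I) * f t) ≤ Cnorm θ a b f := by
  haveI : Nonempty (Set.Icc a b) := ⟨⟨a, Set.left_mem_Icc.mpr hab.le⟩⟩
  haveI : Nonempty (Set.Icc a' b') := ⟨⟨a', Set.left_mem_Icc.mpr ha'b'.le⟩⟩
  set g : ℝ → ℂ := fun t => Complex.exp (ψ t * Complex.I) * f t with hgdef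
  set P : ℝ := ⨆ x : Set.Icc a' b', |deriv ψ (x : ℝ)| with hPdef
  set M0 : ℝ := ⨆ x : Set.Icc a b, ‖f (x : ℝ)‖ with hM0def
  set M1 : ℝ := ⨆ x : Set.Icc a b, ‖deriv f (x : ℝ)‖ with hM1def
  set S : ℝ := ⨆ x : Set.Icc a' b', ‖deriv g (x : ℝ)‖ with hSdef
  -- smoothness of g
  have hψ1 : ContDiff ℝ 1 ψ := hψ.of_le (by simp)
  have hinner : ContDiff ℝ 1 (fun t : ℝ => (ψ t : ℂ) * Complex.I) :=
    (Complex.ofRealCLM.contDiff.comp hψ1).mul contDiff_const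
  have hg1 : ContDiff ℝ 1 g := (hinner.cexp).mul hf
  -- boundedness of ranges
  have bP : BddAbove (Set.range fun x : Set.Icc a' b' => |deriv ψ (x : ℝ)|) :=
    bdd_range_aux ((hψ.continuous_deriv (by simp)).abs.continuousOn)
  have bM0 : BddAbove (Set.range fun x : Set.Icc a b => ‖f (x : ℝ)‖) :=
    bdd_range_aux (hf.continuous.norm.continuousOn)
  have bM1 : BddAbove (Set.range fun x : Set.Icc a b => ‖deriv f (x : ℝ)‖) :=
    bdd_range_aux ((hf.continuous_deriv le_rfl).norm.continuousOn)
  have bS : BddAbove (Set.range fun x : Set.Icc a' b' => ‖deriv g (x : ℝ)‖) :=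
    bdd_range_aux ((hg1.continuous_deriv le_rfl).norm.continuousOn)
  -- nonnegativity
  have hP0 : 0 ≤ P := Real.iSup_nonneg fun x => abs_nonneg _
  have hM00 : 0 ≤ M0 := Real.iSup_nonneg fun x => norm_nonneg _
  have hM10 : 0 ≤ M1 := Real.iSup_nonneg fun x => norm_nonneg _
  -- pointwise derivative bound
  have hder : ∀ x : ℝ, ‖deriv g x‖ ≤ |deriv ψ x| * ‖f x‖ + ‖deriv f x‖ := by
    intro x
    have hψd : HasDerivAt ψ (deriv ψ x) x := (hψ1.differentiable one_ne_zero x).hasDerivAt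
    have hre : HasDerivAt (fun t : ℝ => (ψ t : ℂ)) ((deriv ψ x : ℝ) : ℂ) x := hψd.ofReal_comp
    have hmul : HasDerivAt (fun t : ℝ => (ψ t : ℂ) * Complex.I)
        (((deriv ψ x : ℝ) : ℂ) * Complex.I) x := hre.mul_const _
    have hexp : HasDerivAt (fun t : ℝ => Complex.exp ((ψ t : ℂ) * Complex.I))
        (Complex.exp ((ψ x : ℂ) * Complex.I) * (((deriv ψ x : ℝ) : ℂ) * Complex.I)) x := hmul.cexp
    have hfd : HasDerivAt f (deriv f x) x := (hf.differentiable one_ne_zero x).hasDerivAt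
    have hgd : HasDerivAt g
        (Complex.exp ((ψ x : ℂ) * Complex.I) * (((deriv ψ x : ℝ) : ℂ) * Complex.I) * f x +
          Complex.exp ((ψ x : ℂ) * Complex.I) * deriv f x) x := hexp.mul hfd
    rw [hgd.deriv]
    calc ‖Complex.exp ((ψ x : ℂ) * Complex.I) * (((deriv ψ x : ℝ) : ℂ) * Complex.I) * f x +
          Complex.exp ((ψ x : ℂ) * Complex.I) * deriv f x‖
        ≤ ‖Complex.exp ((ψ x : ℂ) * Complex.I) * (((deriv ψ x : ℝ) : ℂ) * Complex.I) * f x‖ +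
          ‖Complex.exp ((ψ x : ℂ) * Complex.I) * deriv f x‖ := norm_add_le _ _
      _ = |deriv ψ x| * ‖f x‖ + ‖deriv f x‖ := by
          simp [norm_mul, Complex.norm_exp_ofReal_mul_I,
            Complex.norm_real, Complex.norm_I]
  -- sup bound
  have hS : S ≤ P * M0 + M1 := by
    apply ciSup_le
    intro x
    have h1 : |deriv ψ (x : ℝ)| ≤ P := le_ciSup bP x
    have hxab : (x : ℝ) ∈ Set.Icc a b := hsub x.2
    have h2 : ‖f (x : ℝ)‖ ≤ M0 := le_ciSup bM0 ⟨(x : ℝ), hxab⟩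
    have h3 : ‖deriv f (x : ℝ)‖ ≤ M1 := le_ciSup bM1 ⟨(x : ℝ), hxab⟩
    have := hder (x : ℝ)
    have hmm : |deriv ψ (x : ℝ)| * ‖f (x : ℝ)‖ ≤ P * M0 :=
      mul_le_mul h1 h2 (norm_nonneg _) hP0
    linarith
  have hS0 : 0 ≤ S := Real.iSup_nonneg fun x => norm_nonneg _
  have hM0C : M0 ≤ Cnorm θ a b f := le_max_left _ _
  have hM1C : θ * (b - a) * M1 ≤ Cnorm θ a b f := le_max_right _ _
  have hθP : θ * (b' - a') * P ≤ 1 / 4 := by nlinarith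
  have key : θ * (b' - a') * S ≤ Cnorm θ a b f / 2 := by
    have h0 : 0 ≤ θ * (b' - a') := by nlinarith
    have hA : θ * (b' - a') * S ≤ θ * (b' - a') * (P * M0 + M1) :=
      mul_le_mul_of_nonneg_left hS h0
    have hB : θ * (b' - a') * P * M0 ≤ (1 / 4) * M0 :=
      mul_le_mul_of_nonneg_right hθP hM00
    have hC : θ * (b' - a') * M1 ≤ θ * ((b - a) / 4) * M1 := by
      have : θ * (b' - a') ≤ θ * ((b - a) / 4) := by nlinarith
      exact mul_le_mul_of_nonneg_right this hM10
    nlinarith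
  refine ⟨key, ?_⟩
  rw [Cnorm]
  apply max_le
  · apply ciSup_le
    intro x
    have hxab : (x : ℝ) ∈ Set.Icc a b := hsub x.2
    have h2 : ‖f (x : ℝ)‖ ≤ M0 := le_ciSup bM0 ⟨(x : ℝ), hxab⟩
    have hgx : ‖g (x : ℝ)‖ = ‖f (x : ℝ)‖ := by
      simp [hgdef, norm_mul, Complex.norm_exp_ofReal_mul_I]
    calc ‖g (x : ℝ)‖ = ‖f (x : ℝ)‖ := hgx
      _ ≤ M0 := h2
      _ ≤ Cnorm θ a b f := hM0C
  · have hC0 : 0 ≤ Cnorm θ a b f := le_trans hM00 hM0C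
    calc θ * (b' - a') * S ≤ Cnorm θ a b f / 2 := key
      _ ≤ Cnorm θ a b f := by linarith
end

section
/- Let (Λ, μ_Λ) be δ-regular up to scale h ∈ (0,1) with constant C_R, where a pair (X, μ) is called δ-regular up to scale h with constant C_R if μ(I) ≤ C_R|I|^δ for every interval I with |I| ≥ h, and μ(I) ≥ C_R^{-1}|I|^δ for every interval I with h ≤ |I| ≤ 1 centered at a point of X. Let X := Λ + [−h,h] and μ_X(A) := h^{δ−1}·Leb(X ∩ A). Then (X, μ_X) is δ-regular up to scale h with constant 30 C_R². -/
/-!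
Write `X = Λ + [-h, h]`. Both bounds rest on the Fubini identity
`∫ ν([t - c, t + c]) dt = 2c · ν(ℝ)`.

Upper bound on `I = [a, b]`: every `t ∈ I ∩ X` is within `h` of a point of `Λ`, so
`μ_Λ([t - 2h, t + 2h] ∩ K) ≥ C⁻¹ h^δ` with `K = [a - 2h, b + 2h]`; integrating over `I ∩ X`
gives `C⁻¹ h^δ · Leb(I ∩ X) ≤ 4h · μ_Λ(K) ≤ 4h · C (|I| + 4h)^δ`.

Lower bound on `I = [x - r, x + r]`: if `r ≤ 4h`, then `I ∩ X` contains an interval of length `h/2`.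
Otherwise pick `y ∈ Λ` with `|x - y| ≤ h` and let `G = [y - r/2, y + r/2] ∩ Λ`, so that
`μ_Λ(G) ≥ C⁻¹ r^δ` because `μ_Λ` lives on `Λ`. Then `I ∩ X` contains `G + [-h, h]`, and
integrating `μ_Λ|_G([t - h, t + h]) ≤ C (2h)^δ` over `G + [-h, h]` gives
`2h · μ_Λ(G) ≤ C (2h)^δ · Leb(I ∩ X)`.
-/

open MeasureTheory Pointwise

def IsDeltaRegular (X : Set ℝ) (μ : Measure ℝ) (δ C h : ℝ) : Prop :=
  (∀ a b : ℝ, h ≤ b - a → μ (Set.Icc a b) ≤ ENNReal.ofReal (C * (b - a) ^ δ)) ∧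
  (∀ x r : ℝ, x ∈ X → h ≤ 2 * r → 2 * r ≤ 1 →
    ENNReal.ofReal (C⁻¹ * (2 * r) ^ δ) ≤ μ (Set.Icc (x - r) (x + r)))

open scoped ENNReal
open Set

theorem Real.rpow_le_mul_rpow_of_le_mul {x y k δ : ℝ} (hx : 0 ≤ x) (hy : 0 ≤ y) (hk : 1 ≤ k)
    (hδ : δ ∈ Icc (0 : ℝ) 1) (hxy : x ≤ k * y) : x ^ δ ≤ k * y ^ δ :=
  calc x ^ δ ≤ (k * y) ^ δ := Real.rpow_le_rpow hx hxy hδ.1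
    _ = k ^ δ * y ^ δ := Real.mul_rpow (by linarith) hy
    _ ≤ k * y ^ δ := by
      gcongr
      simpa using Real.rpow_le_rpow_of_exponent_le hk hδ.2

theorem mem_add_Icc_neg_iff {s : Set ℝ} {h t : ℝ} :
    t ∈ s + Icc (-h) h ↔ ∃ y ∈ s, |t - y| ≤ h := by
  simp only [mem_add, mem_Icc, abs_le]
  constructor
  · rintro ⟨y, hy, u, hu, rfl⟩
    exact ⟨y, hy, by linarith, by linarith⟩
  · rintro ⟨y, hy, hty⟩
    exact ⟨y, hy, t - y, ⟨by linarith, by linarith⟩, by ring⟩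

section Averaging

variable (ν : Measure ℝ) [SFinite ν]

theorem lintegral_measure_Icc_sub_add (c : ℝ) :
    ∫⁻ t, ν (Icc (t - c) (t + c)) = ENNReal.ofReal (2 * c) * ν univ := by
  set S := {p : ℝ × ℝ | dist p.1 p.2 ≤ c}
  have hS : MeasurableSet S := measurableSet_le (by fun_prop) measurable_const
  have hleft (t : ℝ) : Prod.mk t ⁻¹' S = Metric.closedBall t c := by ext; simp [S, dist_comm]
  have hright (z : ℝ) : (fun t => (t, z)) ⁻¹' S = Metric.closedBall z c := rfl
  calc ∫⁻ t, ν (Icc (t - c) (t + c))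
      = (volume.prod ν) S := by simp [Measure.prod_apply hS, hleft, Real.closedBall_eq_Icc]
    _ = ENNReal.ofReal (2 * c) * ν univ := by
      simp [Measure.prod_apply_symm hS, hright, Real.volume_closedBall]

theorem measurable_measure_Icc_sub_add (c : ℝ) :
    Measurable fun t => ν (Icc (t - c) (t + c)) := by
  have hS : MeasurableSet {p : ℝ × ℝ | dist p.1 p.2 ≤ c} :=
    measurableSet_le (by fun_prop) measurable_const
  convert measurable_measure_prodMk_left (ν := ν) hS using 3 with t
  rw [← Real.closedBall_eq_Icc]; ext; simp [dist_comm]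

theorem mul_volume_le_of_le_measure_Icc {S : Set ℝ} {c : ℝ} {m : ℝ≥0∞}
    (hm : ∀ t ∈ S, m ≤ ν (Icc (t - c) (t + c))) :
    m * volume S ≤ ENNReal.ofReal (2 * c) * ν univ :=
  calc m * volume S ≤ m * volume {t | m ≤ ν (Icc (t - c) (t + c))} := by gcongr; exact hm
    _ ≤ ∫⁻ t, ν (Icc (t - c) (t + c)) :=
      mul_meas_ge_le_lintegral (measurable_measure_Icc_sub_add ν c) m
    _ = ENNReal.ofReal (2 * c) * ν univ := lintegral_measure_Icc_sub_add ν c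

theorem mul_measure_le_mul_volume_add_Icc (G : Set ℝ) {c : ℝ} {M : ℝ≥0∞}
    (hM : ∀ t, ν (Icc (t - c) (t + c)) ≤ M) :
    ENNReal.ofReal (2 * c) * ν G ≤ M * volume (G + Icc (-c) c) :=
  calc ENNReal.ofReal (2 * c) * ν G = ∫⁻ t, ν.restrict G (Icc (t - c) (t + c)) := by
        rw [lintegral_measure_Icc_sub_add, Measure.restrict_apply_univ]
    _ ≤ ∫⁻ t, (G + Icc (-c) c).indicator (fun _ => M) t := by
        refine lintegral_mono fun t => ?_
        rw [Measure.restrict_apply measurableSet_Icc]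
        by_cases ht : t ∈ G + Icc (-c) c
        · rw [indicator_of_mem ht]
          exact (measure_mono inter_subset_left).trans (hM t)
        · have hdisj : Icc (t - c) (t + c) ∩ G = ∅ := by
            refine eq_empty_of_forall_notMem fun w ⟨hw, hwG⟩ => ht ?_
            exact mem_add_Icc_neg_iff.2 ⟨w, hwG, abs_le.2 ⟨by linarith [hw.2], by linarith [hw.1]⟩⟩
          simp [hdisj]
    _ ≤ M * volume (G + Icc (-c) c) := lintegral_indicator_const_le _ _

end Averaging

theorem volume_Icc_inter_add_Icc_ge {Λ : Set ℝ} {h x r : ℝ} (hx : x ∈ Λ + Icc (-h) h)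
    (hr : h ≤ 2 * r) :
    ENNReal.ofReal (h / 2) ≤ volume (Icc (x - r) (x + r) ∩ (Λ + Icc (-h) h)) := by
  obtain ⟨y, hy, hxy⟩ := mem_add_Icc_neg_iff.1 hx
  rw [abs_le] at hxy
  have hsub : Icc (y - h) (y + h) ⊆ Λ + Icc (-h) h := fun w hw =>
    mem_add_Icc_neg_iff.2 ⟨y, hy, abs_le.2 ⟨by linarith [hw.1], by linarith [hw.2]⟩⟩
  have hlen : max (x - r) (y - h) + h / 2 ≤ min (x + r) (y + h) := by
    rw [← max_add_add_right, max_le_iff, le_min_iff, le_min_iff]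
    refine ⟨⟨?_, ?_⟩, ?_, ?_⟩ <;> linarith
  calc ENNReal.ofReal (h / 2) ≤ volume (Icc (x - r) (x + r) ∩ Icc (y - h) (y + h)) := by
        rw [Icc_inter_Icc, Real.volume_Icc]
        exact ENNReal.ofReal_le_ofReal (by linarith)
    _ ≤ volume (Icc (x - r) (x + r) ∩ (Λ + Icc (-h) h)) := by gcongr

theorem le_smul_restrict_add_Icc_Icc_of_le {Λ : Set ℝ} {δ C h : ℝ} (hδ : δ ∈ Icc (0 : ℝ) 1)
    (hh0 : 0 < h) (hC : 1 ≤ C) {x r : ℝ} (hx : x ∈ Λ + Icc (-h) h) (h2r : h ≤ 2 * r)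
    (hr : r ≤ 4 * h) :
    ENNReal.ofReal ((30 * C ^ 2)⁻¹ * (2 * r) ^ δ)
      ≤ (ENNReal.ofReal (h ^ (δ - 1)) • volume.restrict (Λ + Icc (-h) h))
        (Icc (x - r) (x + r)) := by
  rw [Measure.smul_apply, Measure.restrict_apply measurableSet_Icc, smul_eq_mul]
  have h8 : (2 * r) ^ δ ≤ 8 * h ^ δ :=
    Real.rpow_le_mul_rpow_of_le_mul (by linarith) hh0.le (by norm_num) hδ (by linarith)
  have hreal : (30 * C ^ 2)⁻¹ * (2 * r) ^ δ ≤ h ^ (δ - 1) * (h / 2) := by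
    rw [Real.rpow_sub_one hh0.ne']
    have hC2 : 1 ≤ C ^ 2 := by nlinarith
    have hhδ := Real.rpow_pos_of_pos hh0 δ
    field_simp
    nlinarith [mul_le_mul_of_nonneg_right hC2 hhδ.le]
  calc ENNReal.ofReal ((30 * C ^ 2)⁻¹ * (2 * r) ^ δ)
      ≤ ENNReal.ofReal (h ^ (δ - 1)) * ENNReal.ofReal (h / 2) := by
        rw [← ENNReal.ofReal_mul (by positivity)]
        exact ENNReal.ofReal_le_ofReal hreal
    _ ≤ _ := by gcongr; exact volume_Icc_inter_add_Icc_ge hx h2r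

namespace IsDeltaRegular

variable {Λ : Set ℝ} {μ : Measure ℝ} {δ C h : ℝ} [SFinite μ]

theorem mul_volume_Icc_inter_add_Icc_le (hreg : IsDeltaRegular Λ μ δ C h) (hh0 : 0 ≤ h)
    (hh1 : h ≤ 1) {a b : ℝ} (hab : h ≤ b - a) :
    ENNReal.ofReal (C⁻¹ * h ^ δ) * volume (Icc a b ∩ (Λ + Icc (-h) h))
      ≤ ENNReal.ofReal (4 * h) * ENNReal.ofReal (C * (b - a + 4 * h) ^ δ) := by
  set K := Icc (a - 2 * h) (b + 2 * h)
  have hK : μ K ≤ ENNReal.ofReal (C * (b - a + 4 * h) ^ δ) := by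
    convert hreg.1 (a - 2 * h) (b + 2 * h) (by linarith) using 4; ring
  calc ENNReal.ofReal (C⁻¹ * h ^ δ) * volume (Icc a b ∩ (Λ + Icc (-h) h))
      ≤ ENNReal.ofReal (2 * (2 * h)) * μ.restrict K univ := by
        refine mul_volume_le_of_le_measure_Icc _ fun t ⟨hta, htX⟩ => ?_
        obtain ⟨y, hy, hty⟩ := mem_add_Icc_neg_iff.1 htX
        rw [abs_le] at hty
        have hsub : Icc (y - h / 2) (y + h / 2) ⊆ Icc (t - 2 * h) (t + 2 * h) ∩ K :=
          fun w hw => ⟨⟨by linarith [hw.1], by linarith [hw.2]⟩,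
            ⟨by linarith [hw.1, hta.1], by linarith [hw.2, hta.2]⟩⟩
        calc ENNReal.ofReal (C⁻¹ * h ^ δ) = ENNReal.ofReal (C⁻¹ * (2 * (h / 2)) ^ δ) := by
              ring_nf
          _ ≤ μ (Icc (y - h / 2) (y + h / 2)) := hreg.2 y (h / 2) hy (by linarith) (by linarith)
          _ ≤ μ.restrict K (Icc (t - 2 * h) (t + 2 * h)) := by
              rw [Measure.restrict_apply measurableSet_Icc]; exact measure_mono hsub
    _ ≤ ENNReal.ofReal (4 * h) * ENNReal.ofReal (C * (b - a + 4 * h) ^ δ) := by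
        rw [Measure.restrict_apply_univ, show 2 * (2 * h) = 4 * h by ring]; gcongr

theorem mul_le_mul_volume_Icc_inter_add_Icc (hreg : IsDeltaRegular Λ μ δ C h)
    (hsupp : μ Λᶜ = 0) (hh0 : 0 ≤ h) {x r : ℝ} (hx : x ∈ Λ + Icc (-h) h) (hr : 4 * h ≤ r)
    (hr1 : r ≤ 1) :
    ENNReal.ofReal (2 * h) * ENNReal.ofReal (C⁻¹ * r ^ δ)
      ≤ ENNReal.ofReal (C * (2 * h) ^ δ) * volume (Icc (x - r) (x + r) ∩ (Λ + Icc (-h) h)) := by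
  obtain ⟨y, hy, hxy⟩ := mem_add_Icc_neg_iff.1 hx
  rw [abs_le] at hxy
  set G := Icc (y - r / 2) (y + r / 2) ∩ Λ
  have hG : ENNReal.ofReal (C⁻¹ * r ^ δ) ≤ μ G := by
    rw [measure_inter_conull hsupp]
    convert hreg.2 y (r / 2) hy (by linarith) (by linarith) using 4; ring
  have hsub : G + Icc (-h) h ⊆ Icc (x - r) (x + r) ∩ (Λ + Icc (-h) h) := by
    intro w hw
    obtain ⟨z, ⟨hzJ, hzΛ⟩, hwz⟩ := mem_add_Icc_neg_iff.1 hw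
    rw [abs_le] at hwz
    exact ⟨⟨by linarith [hzJ.1], by linarith [hzJ.2]⟩,
      mem_add_Icc_neg_iff.2 ⟨z, hzΛ, abs_le.2 hwz⟩⟩
  calc ENNReal.ofReal (2 * h) * ENNReal.ofReal (C⁻¹ * r ^ δ)
      ≤ ENNReal.ofReal (2 * h) * μ G := by gcongr
    _ ≤ ENNReal.ofReal (C * (2 * h) ^ δ) * volume (G + Icc (-h) h) :=
        mul_measure_le_mul_volume_add_Icc μ G fun t => by
          convert hreg.1 (t - h) (t + h) (by linarith) using 4; ring
    _ ≤ _ := by gcongr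

theorem smul_restrict_add_Icc_Icc_le (hreg : IsDeltaRegular Λ μ δ C h)
    (hδ : δ ∈ Icc (0 : ℝ) 1) (hh0 : 0 < h) (hh1 : h ≤ 1) (hC : 1 ≤ C) {a b : ℝ}
    (hab : h ≤ b - a) :
    (ENNReal.ofReal (h ^ (δ - 1)) • volume.restrict (Λ + Icc (-h) h)) (Icc a b)
      ≤ ENNReal.ofReal (30 * C ^ 2 * (b - a) ^ δ) := by
  rw [Measure.smul_apply, Measure.restrict_apply measurableSet_Icc, smul_eq_mul]
  have hpos : ENNReal.ofReal (C⁻¹ * h ^ δ) ≠ 0 := by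
    have hhδ := Real.rpow_pos_of_pos hh0 δ
    positivity
  refine (ENNReal.mul_le_mul_iff_right hpos ENNReal.ofReal_ne_top).1 ?_
  have h5 : (b - a + 4 * h) ^ δ ≤ 5 * (b - a) ^ δ :=
    Real.rpow_le_mul_rpow_of_le_mul (by linarith) (by linarith) (by norm_num) hδ (by linarith)
  have hreal : h ^ (δ - 1) * (4 * h * (C * (b - a + 4 * h) ^ δ))
      ≤ C⁻¹ * h ^ δ * (30 * C ^ 2 * (b - a) ^ δ) := by
    have hCh : 0 ≤ C * h ^ δ := by have hhδ := Real.rpow_pos_of_pos hh0 δ; positivity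
    calc h ^ (δ - 1) * (4 * h * (C * (b - a + 4 * h) ^ δ))
        = 4 * (C * h ^ δ) * (b - a + 4 * h) ^ δ := by
          rw [Real.rpow_sub_one hh0.ne']; field_simp
      _ ≤ 4 * (C * h ^ δ) * (5 * (b - a) ^ δ) := by gcongr
      _ ≤ 30 * (C * h ^ δ) * (b - a) ^ δ := by
          have hbaδ := Real.rpow_nonneg (show 0 ≤ b - a by linarith) δ
          nlinarith [mul_nonneg hCh hbaδ]
      _ = C⁻¹ * h ^ δ * (30 * C ^ 2 * (b - a) ^ δ) := by field_simp
  calc ENNReal.ofReal (C⁻¹ * h ^ δ)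
        * (ENNReal.ofReal (h ^ (δ - 1)) * volume (Icc a b ∩ (Λ + Icc (-h) h)))
      = ENNReal.ofReal (h ^ (δ - 1))
        * (ENNReal.ofReal (C⁻¹ * h ^ δ) * volume (Icc a b ∩ (Λ + Icc (-h) h))) :=
        mul_left_comm _ _ _
    _ ≤ ENNReal.ofReal (h ^ (δ - 1))
        * (ENNReal.ofReal (4 * h) * ENNReal.ofReal (C * (b - a + 4 * h) ^ δ)) :=
        mul_le_mul_right (hreg.mul_volume_Icc_inter_add_Icc_le hh0.le hh1 hab) _
    _ ≤ ENNReal.ofReal (C⁻¹ * h ^ δ) * ENNReal.ofReal (30 * C ^ 2 * (b - a) ^ δ) := by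
        rw [← ENNReal.ofReal_mul (by positivity), ← ENNReal.ofReal_mul (by positivity),
          ← ENNReal.ofReal_mul (by positivity)]
        exact ENNReal.ofReal_le_ofReal hreal

theorem le_smul_restrict_add_Icc_Icc_of_ge (hreg : IsDeltaRegular Λ μ δ C h)
    (hsupp : μ Λᶜ = 0) (hδ : δ ∈ Icc (0 : ℝ) 1) (hh0 : 0 < h) (hC : 1 ≤ C) {x r : ℝ}
    (hx : x ∈ Λ + Icc (-h) h) (hr : 4 * h ≤ r) (hr1 : r ≤ 1) :
    ENNReal.ofReal ((30 * C ^ 2)⁻¹ * (2 * r) ^ δ)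
      ≤ (ENNReal.ofReal (h ^ (δ - 1)) • volume.restrict (Λ + Icc (-h) h))
        (Icc (x - r) (x + r)) := by
  rw [Measure.smul_apply, Measure.restrict_apply measurableSet_Icc, smul_eq_mul]
  have hpos : ENNReal.ofReal (C * (2 * h) ^ δ) ≠ 0 := by
    have hhδ := Real.rpow_pos_of_pos (show 0 < 2 * h by linarith) δ
    have hC0 : 0 < C := by linarith
    positivity
  refine (ENNReal.mul_le_mul_iff_right hpos ENNReal.ofReal_ne_top).1 ?_
  have h2 : (2 * r) ^ δ ≤ 2 * r ^ δ :=
    Real.rpow_le_mul_rpow_of_le_mul (by linarith) (by linarith) one_le_two hδ le_rfl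
  have h2' : (2 : ℝ) ^ δ ≤ 2 := by
    simpa using Real.rpow_le_mul_rpow_of_le_mul zero_le_two zero_le_one one_le_two hδ (by norm_num)
  have hreal : C * (2 * h) ^ δ * ((30 * C ^ 2)⁻¹ * (2 * r) ^ δ)
      ≤ h ^ (δ - 1) * (2 * h * (C⁻¹ * r ^ δ)) := by
    rw [Real.rpow_sub_one hh0.ne', Real.mul_rpow zero_le_two hh0.le]
    have hhδ := Real.rpow_pos_of_pos hh0 δ
    have hrδ := Real.rpow_nonneg (show 0 ≤ 2 * r by linarith) δ
    have h2δ := Real.rpow_nonneg (show (0 : ℝ) ≤ 2 by norm_num) δ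
    field_simp
    nlinarith
  calc ENNReal.ofReal (C * (2 * h) ^ δ) * ENNReal.ofReal ((30 * C ^ 2)⁻¹ * (2 * r) ^ δ)
      ≤ ENNReal.ofReal (h ^ (δ - 1))
        * (ENNReal.ofReal (2 * h) * ENNReal.ofReal (C⁻¹ * r ^ δ)) := by
        rw [← ENNReal.ofReal_mul (by positivity), ← ENNReal.ofReal_mul (by positivity),
          ← ENNReal.ofReal_mul (by positivity)]
        exact ENNReal.ofReal_le_ofReal hreal
    _ ≤ ENNReal.ofReal (h ^ (δ - 1)) * (ENNReal.ofReal (C * (2 * h) ^ δ)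
        * volume (Icc (x - r) (x + r) ∩ (Λ + Icc (-h) h))) :=
        mul_le_mul_right (hreg.mul_le_mul_volume_Icc_inter_add_Icc hsupp hh0.le hx hr hr1) _
    _ = _ := mul_left_comm _ _ _

end IsDeltaRegular

theorem stmt9_general (Λ : Set ℝ) (μΛ : Measure ℝ) (δ h C_R : ℝ)
    [IsFiniteMeasure μΛ] (hsupp : μΛ Λᶜ = 0)
    (hδ : δ ∈ Set.Icc (0:ℝ) 1) (hh : h ∈ Set.Ioo (0:ℝ) 1) (hC : 1 ≤ C_R)
    (hreg : IsDeltaRegular Λ μΛ δ C_R h) :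
    IsDeltaRegular (Λ + Set.Icc (-h) h)
      (ENNReal.ofReal (h ^ (δ - 1)) • volume.restrict (Λ + Set.Icc (-h) h))
      δ (30 * C_R ^ 2) h := by
  obtain ⟨hh0, hh1⟩ := hh
  refine ⟨fun a b hab => hreg.smul_restrict_add_Icc_Icc_le hδ hh0 hh1.le hC hab,
    fun x r hx h2r h2r1 => ?_⟩
  rcases le_or_gt r (4 * h) with hr | hr
  · exact le_smul_restrict_add_Icc_Icc_of_le hδ hh0 hC hx h2r hr
  · exact hreg.le_smul_restrict_add_Icc_Icc_of_ge hsupp hδ hh0 hC hx hr.le (by linarith)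

theorem stmt9 (Λ : Set ℝ) (μΛ : Measure ℝ) (δ h C_R : ℝ)
    (hΛ : IsCompact Λ) [IsFiniteMeasure μΛ] (hsupp : μΛ Λᶜ = 0)
    (hδ : δ ∈ Set.Icc (0:ℝ) 1) (hh : h ∈ Set.Ioo (0:ℝ) 1) (hC : 1 ≤ C_R)
    (hreg : IsDeltaRegular Λ μΛ δ C_R h) :
    IsDeltaRegular (Λ + Set.Icc (-h) h)
      (ENNReal.ofReal (h ^ (δ - 1)) • volume.restrict (Λ + Set.Icc (-h) h))
      δ (30 * C_R ^ 2) h :=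
  stmt9_general Λ μΛ δ h C_R hsupp hδ hh hC hreg
end

section
/- Let (Λ, μ_Λ) be δ-regular up to scale h with constant C_R, X := Λ + [−h,h], and I any interval with |I| ≥ h. If x₁,…,x_N ∈ Λ ∩ (I + [−h,h]) is a maximal 2h-separated set, then N·C_R^{-1}h^δ ≤ 5C_R|I|^δ and Leb(X ∩ I) ≤ 6hN; consequently h^{δ−1}Leb(X ∩ I) ≤ 30C_R²|I|^δ. -/
open MeasureTheory Pointwise

theorem stmt10 (Λ : Set ℝ) (μΛ : Measure ℝ) (δ h C_R : ℝ)
    [IsFiniteMeasure μΛ] (hsupp : μΛ Λᶜ = 0)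
    (hδ : δ ∈ Set.Icc (0:ℝ) 1) (hh : h ∈ Set.Ioo (0:ℝ) 1) (hC : 1 ≤ C_R)
    (hreg : IsDeltaRegular Λ μΛ δ C_R h)
    (a b : ℝ) (hab : h ≤ b - a)
    (N : ℕ) (x : Fin N → ℝ)
    (hx : ∀ i, x i ∈ Λ ∩ Set.Icc (a - h) (b + h))
    (hsep : ∀ i j, i ≠ j → 2 * h ≤ |x i - x j|)
    (hmax : ∀ y ∈ Λ ∩ Set.Icc (a - h) (b + h), ∃ i, |y - x i| < 2 * h) :
    (N : ℝ) * C_R⁻¹ * h ^ δ ≤ 5 * C_R * (b - a) ^ δ ∧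
    (volume ((Λ + Set.Icc (-h) h) ∩ Set.Icc a b)).toReal ≤ 6 * h * N ∧
    h ^ (δ - 1) * (volume ((Λ + Set.Icc (-h) h) ∩ Set.Icc a b)).toReal
      ≤ 30 * C_R ^ 2 * (b - a) ^ δ := by
  obtain ⟨hh0, hh1⟩ := hh
  obtain ⟨hδ0, hδ1⟩ := hδ
  have hC0 : (0:ℝ) < C_R := lt_of_lt_of_le one_pos hC
  have hba0 : (0:ℝ) < b - a := lt_of_lt_of_le hh0 hab
  have hhδ : (0:ℝ) < h ^ δ := Real.rpow_pos_of_pos hh0 δ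
  have hbaδ : (0:ℝ) < (b - a) ^ δ := Real.rpow_pos_of_pos hba0 δ
  -- Part 1
  have part1 : (N : ℝ) * C_R⁻¹ * h ^ δ ≤ 5 * C_R * (b - a) ^ δ := by
    set B : Fin N → Set ℝ := fun i => Set.Icc (x i - h/2) (x i + h/2) with hB
    have hdisj : Pairwise (Function.onFun Disjoint B) := by
      intro i j hij
      rw [Function.onFun, Set.disjoint_left]
      intro y hyi hyj
      have h1 : |x i - x j| ≤ h := by
        have := abs_sub_abs_le_abs_sub (x i - y) (x j - y)
        have hyi1 := hyi.1; have hyi2 := hyi.2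
        have hyj1 := hyj.1; have hyj2 := hyj.2
        have e1 : |x i - y| ≤ h/2 := by
          rw [abs_sub_le_iff]; constructor <;> linarith
        have e2 : |x j - y| ≤ h/2 := by
          rw [abs_sub_le_iff]; constructor <;> linarith
        calc |x i - x j| = |(x i - y) - (x j - y)| := by ring_nf
          _ ≤ |x i - y| + |x j - y| := abs_sub _ _
          _ ≤ h := by linarith
      linarith [hsep i j hij]
    have hlow : ∀ i, ENNReal.ofReal (C_R⁻¹ * h ^ δ) ≤ μΛ (B i) := by
      intro i
      have := hreg.2 (x i) (h/2) (hx i).1 (by linarith) (by linarith)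
      have e : (2:ℝ) * (h/2) = h := by ring
      rwa [e] at this
    have hsub : (⋃ i, B i) ⊆ Set.Icc (a - 2*h) (b + 2*h) := by
      intro y hy
      obtain ⟨i, hi⟩ := Set.mem_iUnion.mp hy
      obtain ⟨_, h1, h2⟩ := hx i
      exact ⟨by linarith [hi.1], by linarith [hi.2]⟩
    have hup : μΛ (⋃ i, B i) ≤ ENNReal.ofReal (C_R * (b - a + 4*h) ^ δ) := by
      have := hreg.1 (a - 2*h) (b + 2*h) (by linarith)
      have e : b + 2*h - (a - 2*h) = b - a + 4*h := by ring
      rw [e] at this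
      exact le_trans (measure_mono hsub) this
    have hmeas : μΛ (⋃ i, B i) = ∑' i, μΛ (B i) :=
      measure_iUnion hdisj (fun i => measurableSet_Icc)
    have hsum : (N : ENNReal) * ENNReal.ofReal (C_R⁻¹ * h ^ δ) ≤ μΛ (⋃ i, B i) := by
      rw [hmeas, tsum_fintype]
      calc (N : ENNReal) * ENNReal.ofReal (C_R⁻¹ * h ^ δ)
          = ∑ _i : Fin N, ENNReal.ofReal (C_R⁻¹ * h ^ δ) := by
            rw [Finset.sum_const, Finset.card_univ, Fintype.card_fin, nsmul_eq_mul]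
        _ ≤ ∑ i, μΛ (B i) := Finset.sum_le_sum fun i _ => hlow i
    have key : (N : ℝ) * (C_R⁻¹ * h ^ δ) ≤ C_R * (b - a + 4*h) ^ δ := by
      have h1 : ENNReal.ofReal ((N : ℝ) * (C_R⁻¹ * h ^ δ)) ≤
          ENNReal.ofReal (C_R * (b - a + 4*h) ^ δ) := by
        rw [ENNReal.ofReal_mul (by positivity), ENNReal.ofReal_natCast]
        exact le_trans hsum hup
      exact (ENNReal.ofReal_le_ofReal_iff (by positivity)).mp h1
    have hgrow : (b - a + 4*h) ^ δ ≤ 5 * (b - a) ^ δ := by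
      calc (b - a + 4*h) ^ δ ≤ (5 * (b - a)) ^ δ :=
            Real.rpow_le_rpow (by linarith) (by linarith) hδ0
        _ = 5 ^ δ * (b - a) ^ δ := Real.mul_rpow (by norm_num) hba0.le
        _ ≤ 5 * (b - a) ^ δ := by
            have : (5:ℝ) ^ δ ≤ 5 ^ (1:ℝ) :=
              Real.rpow_le_rpow_of_exponent_le (by norm_num) hδ1
            rw [Real.rpow_one] at this
            nlinarith
    calc (N : ℝ) * C_R⁻¹ * h ^ δ = (N : ℝ) * (C_R⁻¹ * h ^ δ) := by ring
      _ ≤ C_R * (b - a + 4*h) ^ δ := key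
      _ ≤ C_R * (5 * (b - a) ^ δ) := by nlinarith
      _ = 5 * C_R * (b - a) ^ δ := by ring
  -- Part 2
  have part2 : (volume ((Λ + Set.Icc (-h) h) ∩ Set.Icc a b)).toReal ≤ 6 * h * N := by
    have hsub : (Λ + Set.Icc (-h) h) ∩ Set.Icc a b ⊆
        ⋃ i, Set.Icc (x i - 3*h) (x i + 3*h) := by
      rintro z ⟨hz1, hz2⟩
      rw [Set.mem_add] at hz1
      obtain ⟨y, hy, t, ht, hyt⟩ := hz1
      have hyI : y ∈ Λ ∩ Set.Icc (a - h) (b + h) := by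
        refine ⟨hy, ?_, ?_⟩
        · have := hz2.1; have := ht.2; linarith [hyt ▸ (by linarith : a ≤ y + t)]
        · have := hz2.2; have := ht.1; linarith [hyt ▸ (by linarith : y + t ≤ b)]
      obtain ⟨i, hi⟩ := hmax y hyI
      rw [abs_sub_lt_iff] at hi
      refine Set.mem_iUnion.mpr ⟨i, ?_, ?_⟩
      · have := ht.1; linarith [hi.2, hyt ▸ (le_refl z)]
      · have := ht.2; linarith [hi.1]
    have hvol : volume ((Λ + Set.Icc (-h) h) ∩ Set.Icc a b) ≤
        (N : ENNReal) * ENNReal.ofReal (6 * h) := by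
      calc volume ((Λ + Set.Icc (-h) h) ∩ Set.Icc a b)
          ≤ volume (⋃ i, Set.Icc (x i - 3*h) (x i + 3*h)) := measure_mono hsub
        _ ≤ ∑' i, volume (Set.Icc (x i - 3*h) (x i + 3*h)) := measure_iUnion_le _
        _ = ∑' _i : Fin N, ENNReal.ofReal (6 * h) := by
            congr 1; funext i
            rw [Real.volume_Icc]; congr 1; ring
        _ = (N : ENNReal) * ENNReal.ofReal (6 * h) := by
            rw [tsum_fintype, Finset.sum_const, Finset.card_univ, Fintype.card_fin,
              nsmul_eq_mul]
    have hfin : (N : ENNReal) * ENNReal.ofReal (6 * h) ≠ ⊤ := by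
      exact ENNReal.mul_ne_top (ENNReal.natCast_ne_top N) ENNReal.ofReal_ne_top
    calc (volume ((Λ + Set.Icc (-h) h) ∩ Set.Icc a b)).toReal
        ≤ ((N : ENNReal) * ENNReal.ofReal (6 * h)).toReal :=
          ENNReal.toReal_mono hfin hvol
      _ = (N : ℝ) * (6 * h) := by
          rw [ENNReal.toReal_mul, ENNReal.toReal_ofReal (by linarith)]; simp
      _ = 6 * h * N := by ring
  refine ⟨part1, part2, ?_⟩
  -- Part 3
  have hNbound : (N : ℝ) * h ^ δ ≤ 5 * C_R ^ 2 * (b - a) ^ δ := by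
    have := mul_le_mul_of_nonneg_left part1 hC0.le
    have e : C_R * ((N : ℝ) * C_R⁻¹ * h ^ δ) = (N : ℝ) * h ^ δ * (C_R * C_R⁻¹) := by ring
    rw [e, mul_inv_cancel₀ (ne_of_gt hC0), mul_one] at this
    nlinarith
  have hpow : h ^ (δ - 1) * h = h ^ δ := by
    conv_rhs => rw [show δ = δ - 1 + 1 by ring]
    rw [Real.rpow_add_one hh0.ne']
  have hδ1pos : (0:ℝ) < h ^ (δ - 1) := Real.rpow_pos_of_pos hh0 _
  calc h ^ (δ - 1) * (volume ((Λ + Set.Icc (-h) h) ∩ Set.Icc a b)).toReal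
      ≤ h ^ (δ - 1) * (6 * h * N) := by
        exact mul_le_mul_of_nonneg_left part2 hδ1pos.le
    _ = 6 * (N : ℝ) * (h ^ (δ - 1) * h) := by ring
    _ = 6 * ((N : ℝ) * h ^ δ) := by rw [hpow]; ring
    _ ≤ 6 * (5 * C_R ^ 2 * (b - a) ^ δ) := by nlinarith
    _ = 30 * C_R ^ 2 * (b - a) ^ δ := by ring
end

section
/- Let M ≥ 2 be an integer, A ⊂ {0,…,M−1} a nonempty alphabet, δ = log|A|/log M, and for k ≥ 1 let C_k = {∑_{j=0}^{k−1} a_j M^j : a_j ∈ A} ⊂ {0,…,M^k−1}. Then for every interval J ⊂ ℝ with 1 ≤ |J|, #(C_k ∩ J) ≤ 2M^{2δ}|J|^δ, and for every interval J with 1 ≤ |J| ≤ M^k centered at a point of C_k, #(C_k ∩ J) ≥ (2M^{2δ})^{-1}|J|^δ. -/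
/-! ### Auxiliary lemmas about digit sums -/

lemma dsum_nonneg {M : ℕ} {n : ℕ} (a : Fin n → ℕ) :
    0 ≤ ∑ j, (a j : ℤ) * (M : ℤ) ^ (j : ℕ) :=
  Finset.sum_nonneg fun j _ => mul_nonneg (by positivity) (by positivity)

lemma dsum_lt {M : ℕ} (hM : 1 ≤ M) {n : ℕ} (a : Fin n → ℕ) (ha : ∀ j, a j < M) :
    ∑ j, (a j : ℤ) * (M : ℤ) ^ (j : ℕ) < (M : ℤ) ^ n := by
  induction n with
  | zero => simp
  | succ n ih =>
    rw [Fin.sum_univ_succ]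
    have h1 : ∑ j : Fin n, (a j.succ : ℤ) * (M:ℤ) ^ ((j.succ : Fin (n+1)) : ℕ)
        = (M:ℤ) * ∑ j : Fin n, (a j.succ : ℤ) * (M:ℤ) ^ (j : ℕ) := by
      rw [Finset.mul_sum]
      apply Finset.sum_congr rfl
      intro j _
      simp [Fin.val_succ, pow_succ]
      ring
    rw [h1]
    have h2 := ih (fun j => a j.succ) (fun j => ha j.succ)
    have h3 : (a 0 : ℤ) < M := by exact_mod_cast ha 0
    have h2' : ∑ j : Fin n, (a j.succ : ℤ) * (M:ℤ) ^ (j : ℕ) ≤ (M:ℤ)^n - 1 := by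
      omega
    have h4 : (M:ℤ) * ∑ j : Fin n, (a j.succ : ℤ) * (M:ℤ) ^ (j : ℕ) ≤ (M:ℤ) * ((M:ℤ)^n - 1) :=
      mul_le_mul_of_nonneg_left h2' (by positivity)
    have : (0:ℤ) < M := by exact_mod_cast hM
    calc (a 0 : ℤ) * (M:ℤ)^((0 : Fin (n+1)):ℕ) + _ ≤ (M - 1) * 1 + (M:ℤ) * ((M:ℤ)^n - 1) := by
          apply add_le_add _ h4
          simp only [Fin.val_zero, pow_zero]
          nlinarith
      _ < (M:ℤ)^(n+1) := by ring_nf; nlinarith [pow_pos this n]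

lemma dsum_inj {M : ℕ} (hM : 1 ≤ M) : ∀ {n : ℕ} (a b : Fin n → ℕ),
    (∀ j, a j < M) → (∀ j, b j < M) →
    ∑ j, (a j : ℤ) * (M : ℤ) ^ (j : ℕ) = ∑ j, (b j : ℤ) * (M : ℤ) ^ (j : ℕ) → a = b := by
  intro n
  induction n with
  | zero => intro a b _ _ _; funext j; exact absurd j.2 (by omega)
  | succ n ih =>
    intro a b ha hb heq
    rw [Fin.sum_univ_succ, Fin.sum_univ_succ] at heq
    have h1 : ∀ (c : Fin (n+1) → ℕ), ∑ j : Fin n, (c j.succ : ℤ) * (M:ℤ) ^ ((j.succ : Fin (n+1)) : ℕ)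
        = (M:ℤ) * ∑ j : Fin n, (c j.succ : ℤ) * (M:ℤ) ^ (j : ℕ) := by
      intro c
      rw [Finset.mul_sum]
      exact Finset.sum_congr rfl fun j _ => by simp [Fin.val_succ, pow_succ]; ring
    rw [h1 a, h1 b] at heq
    simp only [Fin.val_zero, pow_zero, mul_one] at heq
    have hM0 : (0:ℤ) < M := by exact_mod_cast hM
    have ha0 : (a 0 : ℤ) < M := by exact_mod_cast ha 0
    have hb0 : (b 0 : ℤ) < M := by exact_mod_cast hb 0
    have hmod : (a 0 : ℤ) = (b 0 : ℤ) := by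
      have := congrArg (fun x => x % (M:ℤ)) heq
      simp only [Int.add_mul_emod_self_left] at this
      rwa [Int.emod_eq_of_lt (by positivity) ha0, Int.emod_eq_of_lt (by positivity) hb0] at this
    have htail : ∑ j : Fin n, (a j.succ : ℤ) * (M:ℤ) ^ (j : ℕ)
        = ∑ j : Fin n, (b j.succ : ℤ) * (M:ℤ) ^ (j : ℕ) := by
      have := heq
      rw [hmod] at this
      exact mul_left_cancel₀ (by omega) (add_left_cancel this)
    have := ih (fun j => a j.succ) (fun j => b j.succ) (fun j => ha j.succ) (fun j => hb j.succ)
      (by simpa using htail)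
    funext j
    refine Fin.cases ?_ ?_ j
    · exact_mod_cast hmod
    · intro i; exact congrFun this i

/-- The discrete Cantor set `C_k = {∑ a_j M^j : a_j ∈ A}`. -/
def Cantor (M : ℕ) (A : Finset ℕ) (k : ℕ) : Set ℤ :=
  {m | ∃ a : Fin k → ℕ, (∀ j, a j ∈ A) ∧ m = ∑ j, (a j : ℤ) * (M : ℤ) ^ (j : ℕ)}

lemma cantor_split (M : ℕ) (A : Finset ℕ) (s t : ℕ) (m : ℤ) :
    m ∈ Cantor M A (s + t) ↔
      ∃ l ∈ Cantor M A s, ∃ h ∈ Cantor M A t, m = l + (M:ℤ)^s * h := by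
  constructor
  · rintro ⟨a, ha, rfl⟩
    refine ⟨∑ i : Fin s, (a (Fin.castAdd t i) : ℤ) * (M:ℤ)^(i:ℕ),
      ⟨fun i => a (Fin.castAdd t i), fun i => ha _, rfl⟩,
      ∑ i : Fin t, (a (Fin.natAdd s i) : ℤ) * (M:ℤ)^(i:ℕ),
      ⟨fun i => a (Fin.natAdd s i), fun i => ha _, rfl⟩, ?_⟩
    rw [Fin.sum_univ_add]
    simp only [Fin.coe_castAdd, Fin.coe_natAdd, pow_add, Finset.mul_sum]
    congr 1
    exact Finset.sum_congr rfl fun i _ => by ring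
  · rintro ⟨l, ⟨al, hal, rfl⟩, h, ⟨ah, hah, rfl⟩, rfl⟩
    refine ⟨Fin.append al ah, fun j => ?_, ?_⟩
    · refine Fin.addCases (fun i => ?_) (fun i => ?_) j
      · rw [Fin.append_left]; exact hal i
      · rw [Fin.append_right]; exact hah i
    · rw [Fin.sum_univ_add]
      simp only [Fin.coe_castAdd, Fin.coe_natAdd, pow_add, Finset.mul_sum,
        Fin.append_left, Fin.append_right]
      congr 1
      exact Finset.sum_congr rfl fun i _ => by ring

lemma cantor_eq_image (M : ℕ) (A : Finset ℕ) (k : ℕ) :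
    Cantor M A k = (fun a : Fin k → ℕ => ∑ j, (a j : ℤ) * (M : ℤ) ^ (j : ℕ)) ''
      ↑(Fintype.piFinset fun _ : Fin k => A) := by
  ext m
  simp [Cantor, Set.mem_image, Fintype.mem_piFinset, eq_comm, and_comm]

lemma cantor_finite (M : ℕ) (A : Finset ℕ) (k : ℕ) : (Cantor M A k).Finite := by
  rw [cantor_eq_image]
  exact ((Fintype.piFinset fun _ : Fin k => A).finite_toSet).image _

lemma cantor_ncard_le (M : ℕ) (A : Finset ℕ) (k : ℕ) :
    (Cantor M A k).ncard ≤ A.card ^ k := by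
  rw [cantor_eq_image]
  calc _ ≤ (↑(Fintype.piFinset fun _ : Fin k => A) : Set (Fin k → ℕ)).ncard :=
        Set.ncard_image_le (Finset.finite_toSet _)
    _ = A.card ^ k := by
        rw [Set.ncard_coe_finset, Fintype.card_piFinset]
        simp

lemma cantor_mem_range {M : ℕ} (hM : 1 ≤ M) {A : Finset ℕ} (hAM : ∀ a ∈ A, a < M)
    {k : ℕ} {m : ℤ} (hm : m ∈ Cantor M A k) : 0 ≤ m ∧ m < (M:ℤ)^k := by
  obtain ⟨a, ha, rfl⟩ := hm
  exact ⟨dsum_nonneg a, dsum_lt hM a fun j => hAM _ (ha j)⟩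

lemma cantor_block_le {M : ℕ} (hM : 1 ≤ M) {A : Finset ℕ} (hAM : ∀ a ∈ A, a < M)
    (s t : ℕ) (q : ℤ) :
    {m : ℤ | m ∈ Cantor M A (s + t) ∧ m / (M:ℤ)^s = q}.ncard ≤ A.card ^ s := by
  have key : ∀ m ∈ {m : ℤ | m ∈ Cantor M A (s + t) ∧ m / (M:ℤ)^s = q},
      m % (M:ℤ)^s ∈ Cantor M A s := by
    rintro m ⟨hm, -⟩
    obtain ⟨l, hl, h, hh, rfl⟩ := (cantor_split M A s t _).1 hm
    obtain ⟨hl0, hl1⟩ := cantor_mem_range hM hAM hl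
    rwa [Int.add_mul_emod_self_left, Int.emod_eq_of_lt hl0 hl1]
  calc {m : ℤ | m ∈ Cantor M A (s + t) ∧ m / (M:ℤ)^s = q}.ncard
      ≤ (Cantor M A s).ncard := by
        refine Set.ncard_le_ncard_of_injOn (fun m => m % (M:ℤ)^s) key ?_ (cantor_finite M A s)
        rintro m1 ⟨-, h1⟩ m2 ⟨-, h2⟩ heq
        have e1 := Int.mul_ediv_add_emod m1 ((M:ℤ)^s)
        have e2 := Int.mul_ediv_add_emod m2 ((M:ℤ)^s)
        rw [h1] at e1; rw [h2] at e2
        simp only at heq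
        omega
    _ ≤ A.card ^ s := cantor_ncard_le M A s

lemma cantor_block_le' {M : ℕ} (hM : 1 ≤ M) {A : Finset ℕ} (hAM : ∀ a ∈ A, a < M)
    {s k : ℕ} (hsk : s ≤ k) (q : ℤ) :
    {m : ℤ | m ∈ Cantor M A k ∧ m / (M:ℤ)^s = q}.ncard ≤ A.card ^ s := by
  obtain ⟨t, rfl⟩ := Nat.exists_eq_add_of_le hsk
  exact cantor_block_le hM hAM s t q

lemma cantor_fiber_card {M : ℕ} (hM : 1 ≤ M) {A : Finset ℕ} (hAM : ∀ a ∈ A, a < M)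
    (s : ℕ) (h₀ : ℤ) :
    {m : ℤ | ∃ l ∈ Cantor M A s, m = l + (M:ℤ)^s * h₀}.ncard = A.card ^ s := by
  have : {m : ℤ | ∃ l ∈ Cantor M A s, m = l + (M:ℤ)^s * h₀}
      = (fun a : Fin s → ℕ => (∑ j, (a j : ℤ) * (M : ℤ) ^ (j : ℕ)) + (M:ℤ)^s * h₀) ''
        ↑(Fintype.piFinset fun _ : Fin s => A) := by
    ext m
    simp only [Set.mem_setOf_eq, Set.mem_image, Finset.coe_sort_coe, Fintype.mem_piFinset,
      Finset.mem_coe, Cantor, Set.mem_setOf_eq]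
    constructor
    · rintro ⟨l, ⟨a, ha, rfl⟩, rfl⟩; exact ⟨a, ha, rfl⟩
    · rintro ⟨a, ha, rfl⟩; exact ⟨_, ⟨a, ha, rfl⟩, rfl⟩
  rw [this, Set.ncard_image_of_injOn, Set.ncard_coe_finset, Fintype.card_piFinset]
  · simp
  · rintro a ha b hb heq
    simp only [Finset.coe_sort_coe, Finset.mem_coe, Fintype.mem_piFinset] at ha hb
    have : ∑ j, (a j : ℤ) * (M : ℤ) ^ (j : ℕ) = ∑ j, (b j : ℤ) * (M : ℤ) ^ (j : ℕ) := by
      simpa using heq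
    exact dsum_inj hM a b (fun j => hAM _ (ha j)) (fun j => hAM _ (hb j)) this

lemma exists_scale_upper {M : ℝ} (hM : 1 ≤ M) {L : ℝ} (hL : 1 ≤ L) {k : ℕ}
    (hk : L ≤ M ^ k) : ∃ s ≤ k, L ≤ M ^ s ∧ M ^ s ≤ M * L := by
  classical
  have hP : ∃ s, L ≤ M ^ s := ⟨k, hk⟩
  refine ⟨Nat.find hP, Nat.find_le hk, Nat.find_spec hP, ?_⟩
  rcases Nat.eq_zero_or_eq_succ_pred (Nat.find hP) with h0 | hsucc
  · rw [h0]; simpa using by nlinarith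
  · rw [hsucc, pow_succ]
    have hn : ¬ L ≤ M ^ (Nat.find hP - 1) := Nat.find_min hP (by omega)
    push_neg at hn
    rw [mul_comm]
    exact mul_le_mul_of_nonneg_left hn.le (by linarith)

lemma exists_scale_lower {M : ℝ} (hM : 2 ≤ M) {r : ℝ} (hr : 1 ≤ 2 * r) {k : ℕ}
    (hk : 2 * r ≤ M ^ k) (hk1 : 1 ≤ k) :
    ∃ s ≤ k, M ^ s - 1 ≤ r ∧ 2 * r ≤ M ^ (s + 2) := by
  classical
  have hMpos : (0:ℝ) < M := by linarith
  have hP : ∃ s, r < M ^ (s + 1) := by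
    refine ⟨k - 1, ?_⟩
    have : k - 1 + 1 = k := by omega
    rw [this]
    have hMk : (0:ℝ) < M ^ k := by positivity
    linarith
  refine ⟨Nat.find hP, ?_, ?_, ?_⟩
  · have : Nat.find hP ≤ k - 1 := Nat.find_le (by
      have : k - 1 + 1 = k := by omega
      rw [this]
      have hMk : (0:ℝ) < M ^ k := by positivity
      linarith)
    omega
  · rcases Nat.eq_zero_or_eq_succ_pred (Nat.find hP) with h0 | hsucc
    · rw [h0]; simp; linarith
    · have hn : ¬ r < M ^ (Nat.find hP - 1 + 1) := Nat.find_min hP (by omega)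
      push_neg at hn
      have he : Nat.find hP - 1 + 1 = Nat.find hP := by omega
      rw [he] at hn
      linarith
  · have hs := Nat.find_spec hP
    have : M ^ (Nat.find hP + 2) = M * M ^ (Nat.find hP + 1) := by ring
    rw [this]
    nlinarith [pow_pos hMpos (Nat.find hP + 1)]

theorem stmt11 (M : ℕ) (hM : 2 ≤ M) (A : Finset ℕ) (hA : A.Nonempty)
    (hAM : ∀ a ∈ A, a < M) (k : ℕ) (hk : 1 ≤ k) (δ : ℝ)
    (hδ : δ = Real.log A.card / Real.log M) :
    (∀ c d : ℝ, 1 ≤ d - c →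
      (({m : ℤ | m ∈ Cantor M A k ∧ (m : ℝ) ∈ Set.Icc c d}.ncard : ℝ))
        ≤ 2 * (M : ℝ) ^ (2 * δ) * (d - c) ^ δ) ∧
    (∀ j₀ ∈ Cantor M A k, ∀ r : ℝ, 1 ≤ 2 * r → 2 * r ≤ (M : ℝ) ^ k →
      (2 * (M : ℝ) ^ (2 * δ))⁻¹ * (2 * r) ^ δ
        ≤ ({m : ℤ | m ∈ Cantor M A k ∧
            (m : ℝ) ∈ Set.Icc ((j₀ : ℝ) - r) ((j₀ : ℝ) + r)}.ncard : ℝ)) := by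
  have hM1 : 1 ≤ M := by omega
  have hMR : (2:ℝ) ≤ (M:ℝ) := by exact_mod_cast hM
  have hMR1 : (1:ℝ) ≤ (M:ℝ) := by linarith
  have hMpos : (0:ℝ) < (M:ℝ) := by linarith
  have hcard1 : 1 ≤ A.card := hA.card_pos
  have hcardR : (1:ℝ) ≤ (A.card:ℝ) := by exact_mod_cast hcard1
  have hlogM : 0 < Real.log M := Real.log_pos (by linarith)
  have hδ0 : 0 ≤ δ := by
    rw [hδ]
    exact div_nonneg (Real.log_nonneg hcardR) hlogM.le
  -- M^δ = A.card
  have hMδ : (M:ℝ) ^ δ = (A.card : ℝ) := by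
    rw [hδ, Real.rpow_def_of_pos hMpos, mul_comm, div_mul_cancel₀ _ hlogM.ne',
      Real.exp_log (by linarith)]
  have hpow : ∀ s : ℕ, ((A.card : ℝ)) ^ s = ((M:ℝ) ^ s) ^ δ := by
    intro s
    rw [← Real.rpow_natCast ((M:ℝ)) s, ← Real.rpow_mul hMpos.le, mul_comm,
      Real.rpow_mul hMpos.le, hMδ, Real.rpow_natCast]
  have h2δ : (M:ℝ) ^ (2 * δ) = ((M:ℝ) ^ (2:ℕ)) ^ δ := by
    rw [← Real.rpow_natCast ((M:ℝ)) 2, ← Real.rpow_mul hMpos.le]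
    norm_num
  have h2δ1 : (1:ℝ) ≤ (M:ℝ) ^ (2 * δ) := by
    rw [show (1:ℝ) = (M:ℝ) ^ (0:ℝ) from (Real.rpow_zero _).symm]
    exact Real.rpow_le_rpow_of_exponent_le hMR1 (by positivity)
  constructor
  · -- upper bound
    intro c d hcd
    set S := {m : ℤ | m ∈ Cantor M A k ∧ (m : ℝ) ∈ Set.Icc c d} with hS
    have hSsub : S ⊆ Cantor M A k := fun m hm => hm.1
    have hSfin : S.Finite := (cantor_finite M A k).subset hSsub
    have hdc0 : (0:ℝ) < d - c := by linarith
    rcases le_or_gt (d - c) ((M:ℝ)^k) with hle | hgt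
    · -- main case
      obtain ⟨s, hsk, hs1, hs2⟩ := exists_scale_upper hMR1 hcd hle
      -- cover S by two blocks
      set n0 : ℤ := ⌈c⌉ with hn0
      set q : ℤ := n0 / (M:ℤ)^s with hq
      have hMs : (0:ℤ) < (M:ℤ)^s := by positivity
      have hcover : S ⊆ {m : ℤ | m ∈ Cantor M A k ∧ m / (M:ℤ)^s = q}
          ∪ {m : ℤ | m ∈ Cantor M A k ∧ m / (M:ℤ)^s = q + 1} := by
        rintro m ⟨hmC, hm1, hm2⟩
        have hceil : n0 ≤ m := Int.ceil_le.mpr hm1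
        have hcn0 : (n0 : ℝ) < c + 1 := Int.ceil_lt_add_one c
        have hup : (m:ℝ) ≤ (n0:ℝ) + ((M:ℤ)^s : ℝ) := by
          push_cast
          have : (m:ℝ) ≤ d := hm2
          have hcle : c ≤ (n0:ℝ) := Int.le_ceil c
          calc (m:ℝ) ≤ d := this
            _ ≤ c + (M:ℝ)^s := by linarith
            _ ≤ (n0:ℝ) + (M:ℝ)^s := by linarith
        have hupz : m ≤ n0 + (M:ℤ)^s := by exact_mod_cast hup
        have hd1 : q ≤ m / (M:ℤ)^s := Int.ediv_le_ediv hMs hceil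
        have hd2 : m / (M:ℤ)^s ≤ q + 1 := by
          have h := Int.ediv_le_ediv hMs hupz
          have h2 : (n0 + (M:ℤ)^s) / (M:ℤ)^s = q + 1 := by
            rw [show n0 + (M:ℤ)^s = n0 + 1 * (M:ℤ)^s by ring,
              Int.add_mul_ediv_right _ _ hMs.ne']
          rw [h2] at h
          exact h
        rcases eq_or_lt_of_le hd2 with h | h
        · right; exact ⟨hmC, h⟩
        · left; exact ⟨hmC, by omega⟩
      have hcount : S.ncard ≤ 2 * A.card ^ s := by
        calc S.ncard ≤ ({m : ℤ | m ∈ Cantor M A k ∧ m / (M:ℤ)^s = q}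
              ∪ {m : ℤ | m ∈ Cantor M A k ∧ m / (M:ℤ)^s = q + 1}).ncard := by
              refine Set.ncard_le_ncard hcover ?_
              exact ((cantor_finite M A k).subset fun m hm => hm.1).union
                ((cantor_finite M A k).subset fun m hm => hm.1)
          _ ≤ _ + _ := Set.ncard_union_le _ _
          _ ≤ A.card ^ s + A.card ^ s :=
              add_le_add (cantor_block_le' hM1 hAM hsk q) (cantor_block_le' hM1 hAM hsk (q+1))
          _ = 2 * A.card ^ s := by ring
      calc (S.ncard : ℝ) ≤ 2 * (A.card : ℝ) ^ s := by exact_mod_cast hcount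
        _ = 2 * ((M:ℝ)^s) ^ δ := by rw [hpow]
        _ ≤ 2 * ((M:ℝ) * (d - c)) ^ δ := by
            have := Real.rpow_le_rpow (by positivity) hs2 hδ0
            linarith
        _ = 2 * ((M:ℝ) ^ δ * (d - c) ^ δ) := by
            rw [Real.mul_rpow hMpos.le hdc0.le]
        _ ≤ 2 * ((M:ℝ) ^ (2 * δ) * (d - c) ^ δ) := by
            have h1 : (M:ℝ) ^ δ ≤ (M:ℝ) ^ (2 * δ) :=
              Real.rpow_le_rpow_of_exponent_le hMR1 (by linarith)
            have h2 : (0:ℝ) ≤ (d - c) ^ δ := Real.rpow_nonneg hdc0.le δ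
            nlinarith
        _ = 2 * (M:ℝ) ^ (2 * δ) * (d - c) ^ δ := by ring
    · -- easy case: interval longer than M^k
      have hcount : S.ncard ≤ A.card ^ k :=
        (Set.ncard_le_ncard hSsub (cantor_finite M A k)).trans (cantor_ncard_le M A k)
      calc (S.ncard : ℝ) ≤ (A.card : ℝ) ^ k := by exact_mod_cast hcount
        _ = ((M:ℝ)^k) ^ δ := hpow k
        _ ≤ (d - c) ^ δ := Real.rpow_le_rpow (by positivity) hgt.le hδ0
        _ ≤ 2 * (M:ℝ) ^ (2 * δ) * (d - c) ^ δ := by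
            have h2 : (0:ℝ) ≤ (d - c) ^ δ := Real.rpow_nonneg hdc0.le δ
            nlinarith
  · -- lower bound
    intro j₀ hj₀ r hr hrk
    have hrk' : 2 * r ≤ (M:ℝ) ^ k := hrk
    obtain ⟨s, hsk, hs1, hs2⟩ := exists_scale_lower hMR hr hrk' hk
    set S := {m : ℤ | m ∈ Cantor M A k ∧ (m : ℝ) ∈ Set.Icc ((j₀ : ℝ) - r) ((j₀ : ℝ) + r)}
      with hSdef
    have hSfin : S.Finite := (cantor_finite M A k).subset fun m hm => hm.1
    -- decompose j₀
    have hk' : k = s + (k - s) := by omega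
    have hj₀' : j₀ ∈ Cantor M A (s + (k - s)) := hk' ▸ hj₀
    obtain ⟨l₀, hl₀, h₀, hh₀, hj₀eq⟩ := (cantor_split M A s (k - s) j₀).1 hj₀'
    set T := {m : ℤ | ∃ l ∈ Cantor M A s, m = l + (M:ℤ)^s * h₀} with hT
    have hTsub : T ⊆ S := by
      rintro m ⟨l, hl, rfl⟩
      have hmC : l + (M:ℤ)^s * h₀ ∈ Cantor M A k := by
        rw [hk']
        exact (cantor_split M A s (k - s) _).2 ⟨l, hl, h₀, hh₀, rfl⟩
      refine ⟨hmC, ?_, ?_⟩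
      · -- j₀ - r ≤ m
        obtain ⟨hl0, hl1⟩ := cantor_mem_range hM1 hAM hl
        obtain ⟨hl₀0, hl₀1⟩ := cantor_mem_range hM1 hAM hl₀
        have hd : ((l + (M:ℤ)^s * h₀ : ℤ) : ℝ) - (j₀ : ℝ) = ((l : ℤ) : ℝ) - ((l₀ : ℤ) : ℝ) := by
          rw [hj₀eq]; push_cast; ring
        have hb1 : ((l:ℤ):ℝ) - ((l₀:ℤ):ℝ) ≥ -((M:ℝ)^s - 1) := by
          have c1 : (0:ℝ) ≤ ((l:ℤ):ℝ) := by exact_mod_cast hl0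
          have c2 : ((l₀:ℤ):ℝ) ≤ (M:ℝ)^s - 1 := by
            have hz : l₀ ≤ (M:ℤ)^s - 1 := by omega
            have hz' : ((l₀:ℤ):ℝ) ≤ (((M:ℤ)^s - 1 : ℤ) : ℝ) := Int.cast_le.mpr hz
            push_cast at hz'
            linarith
          linarith
        have := hs1
        nlinarith [hb1, hd]
      · obtain ⟨hl0, hl1⟩ := cantor_mem_range hM1 hAM hl
        obtain ⟨hl₀0, hl₀1⟩ := cantor_mem_range hM1 hAM hl₀
        have hd : ((l + (M:ℤ)^s * h₀ : ℤ) : ℝ) - (j₀ : ℝ) = ((l : ℤ) : ℝ) - ((l₀ : ℤ) : ℝ) := by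
          rw [hj₀eq]; push_cast; ring
        have c1 : (0:ℝ) ≤ ((l₀:ℤ):ℝ) := by exact_mod_cast hl₀0
        have c2 : ((l:ℤ):ℝ) ≤ (M:ℝ)^s - 1 := by
          have hz : l ≤ (M:ℤ)^s - 1 := by omega
          have hz' : ((l:ℤ):ℝ) ≤ (((M:ℤ)^s - 1 : ℤ) : ℝ) := Int.cast_le.mpr hz
          push_cast at hz'
          linarith
        nlinarith [hd, hs1]
    have hTcard : T.ncard = A.card ^ s := cantor_fiber_card hM1 hAM s h₀
    have hcount : A.card ^ s ≤ S.ncard := by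
      rw [← hTcard]
      exact Set.ncard_le_ncard hTsub hSfin
    have hNR : ((A.card : ℝ)) ^ s ≤ (S.ncard : ℝ) := by exact_mod_cast hcount
    -- real estimates
    have h2r0 : (0:ℝ) < 2 * r := by linarith
    have key : (2 * r) ^ δ ≤ (M:ℝ) ^ (2 * δ) * (S.ncard : ℝ) := by
      calc (2 * r) ^ δ ≤ ((M:ℝ) ^ (s + 2)) ^ δ :=
            Real.rpow_le_rpow h2r0.le hs2 hδ0
        _ = ((M:ℝ)^(2:ℕ) * (M:ℝ)^s) ^ δ := by rw [pow_add, mul_comm]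
        _ = ((M:ℝ)^(2:ℕ)) ^ δ * ((M:ℝ)^s) ^ δ :=
            Real.mul_rpow (by positivity) (by positivity)
        _ = (M:ℝ) ^ (2 * δ) * ((A.card:ℝ)^s) := by rw [h2δ, hpow]
        _ ≤ (M:ℝ) ^ (2 * δ) * (S.ncard : ℝ) := by
            have : (0:ℝ) < (M:ℝ) ^ (2 * δ) := by positivity
            nlinarith
    rw [inv_mul_le_iff₀ (by positivity)]
    have hpos : (0:ℝ) ≤ (S.ncard : ℝ) := Nat.cast_nonneg _
    have hMN : (0:ℝ) ≤ (M:ℝ) ^ (2 * δ) * (S.ncard : ℝ) :=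
      mul_nonneg (Real.rpow_nonneg hMpos.le _) hpos
    linarith
end

section
/- Let (X, μ_X) be δ-regular up to scale L^{−K} with regularity constant C_R, where 0 < δ < 1, L ≥ 2 and K > 0 are integers. In the base-L discretization of μ_X, every interval I in the discretization tree with height 0 ≤ H(I) ≤ K satisfies L^{−H(I)} ≤ |I| ≤ C_R' L^{−H(I)} and C_R^{-1} L^{−δH(I)} ≤ μ_X(I) ≤ C_R (C_R')^δ L^{−δH(I)}, where C_R' := (3C_R²)^{1/(1−δ)}. -/
open MeasureTheory

/-- `[c,d]` is an interval of the base-`L` discretization of `μ` at height `k`: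
endpoints in `L^{-k}ℤ`, every constituent subinterval of length `L^{-k}` has positive
measure, and the adjacent intervals of length `L^{-k}` have zero measure. -/
def MemVk (μ : Measure ℝ) (L : ℕ) (k : ℕ) (c d : ℝ) : Prop :=
  (∃ m : ℤ, c = (m : ℝ) * (L : ℝ) ^ (-(k : ℤ))) ∧
  (∃ m : ℤ, d = (m : ℝ) * (L : ℝ) ^ (-(k : ℤ))) ∧ c < d ∧
  (∀ m : ℤ, c ≤ (m : ℝ) * (L : ℝ) ^ (-(k : ℤ)) →
    (m : ℝ) * (L : ℝ) ^ (-(k : ℤ)) < d →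
    0 < μ (Set.Icc ((m : ℝ) * (L : ℝ) ^ (-(k : ℤ)))
      (((m : ℝ) + 1) * (L : ℝ) ^ (-(k : ℤ))))) ∧
  μ (Set.Icc (c - (L : ℝ) ^ (-(k : ℤ))) c) = 0 ∧
  μ (Set.Icc d (d + (L : ℝ) ^ (-(k : ℤ)))) = 0

theorem stmt16 (X : Set ℝ) (μX : Measure ℝ) (δ C_R : ℝ) (L K : ℕ)
    (hL : 2 ≤ L) (hK : 0 < K) (hδ0 : 0 < δ) (hδ1 : δ < 1) (hC : 1 ≤ C_R)
    (hX : IsCompact X) [IsFiniteMeasure μX] (hsupp : μX Xᶜ = 0)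
    (hreg : IsDeltaRegular X μX δ C_R ((L : ℝ) ^ (-(K : ℤ)))) :
    ∀ k : ℕ, k ≤ K → ∀ c d : ℝ, MemVk μX L k c d →
      ((L : ℝ) ^ (-(k : ℤ)) ≤ d - c ∧
        d - c ≤ (3 * C_R ^ 2) ^ ((1 : ℝ) / (1 - δ)) * (L : ℝ) ^ (-(k : ℤ))) ∧
      (ENNReal.ofReal (C_R⁻¹ * (L : ℝ) ^ (-(δ * k))) ≤ μX (Set.Icc c d) ∧
        μX (Set.Icc c d) ≤ ENNReal.ofReal
          (C_R * ((3 * C_R ^ 2) ^ ((1 : ℝ) / (1 - δ))) ^ δ * (L : ℝ) ^ (-(δ * k)))) := by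
  intro k hk c d hV
  obtain ⟨⟨m₁, hc⟩, ⟨m₂, hd⟩, hcd, hpos, hleft, hright⟩ := hV
  set ε : ℝ := (L : ℝ) ^ (-(k : ℤ)) with hεdef
  have hL1 : (1 : ℝ) < (L : ℝ) := by
    have : (2 : ℝ) ≤ (L : ℝ) := by exact_mod_cast hL
    linarith
  have hε : 0 < ε := zpow_pos (by linarith) _
  have hε1 : ε ≤ 1 := by
    rw [hεdef, show (1 : ℝ) = (L : ℝ) ^ (0 : ℤ) from (zpow_zero _).symm]
    exact zpow_le_zpow_right₀ hL1.le (by omega)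
  have hhε : (L : ℝ) ^ (-(K : ℤ)) ≤ ε :=
    zpow_le_zpow_right₀ hL1.le (by omega)
  have hC0 : (0 : ℝ) < C_R := by linarith
  -- ball lower bound
  have ball : ∀ x : ℝ, x ∈ X →
      ENNReal.ofReal (C_R⁻¹ * ε ^ δ) ≤ μX (Set.Icc (x - ε / 2) (x + ε / 2)) := by
    intro x hx
    have h2r : 2 * (ε / 2) = ε := by ring
    have := hreg.2 x (ε / 2) hx (by rw [h2r]; exact hhε) (by rw [h2r]; exact hε1)
    rwa [h2r] at this
  have hm : m₁ < m₂ := by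
    by_contra h
    push_neg at h
    have : (m₂ : ℝ) * ε ≤ (m₁ : ℝ) * ε :=
      mul_le_mul_of_nonneg_right (by exact_mod_cast h) hε.le
    rw [← hc, ← hd] at this
    linarith
  set N : ℕ := (m₂ - m₁).toNat with hNdef
  have hN1 : 1 ≤ N := by omega
  have hNε : (N : ℝ) * ε = d - c := by
    have hz : ((N : ℕ) : ℤ) = m₂ - m₁ := Int.toNat_of_nonneg (by omega)
    have hcast : ((N : ℕ) : ℝ) = ((m₂ - m₁ : ℤ) : ℝ) := by exact_mod_cast congrArg (fun t : ℤ => (t : ℝ)) hz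
    rw [hcast, hc, hd]
    push_cast
    ring
  set M : ℕ := (N + 2) / 3 with hMdef
  have hM1 : 1 ≤ M := by omega
  have hN3M : N ≤ 3 * M := by omega
  -- point selection
  have hpt : ∀ j : ℕ, ∃ x : ℝ, j < M →
      x ∈ X ∧ c + 3 * j * ε ≤ x ∧ x ≤ c + (3 * j + 1) * ε := by
    intro j
    by_cases hj : j < M
    · have h3j : (3 : ℕ) * j < N := by omega
      have hmlt : m₁ + 3 * j < m₂ := by omega
      have heq1 : ((m₁ + 3 * j : ℤ) : ℝ) * ε = c + 3 * j * ε := by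
        rw [hc]; push_cast; ring
      have heq2 : (((m₁ + 3 * j : ℤ) : ℝ) + 1) * ε = c + (3 * j + 1) * ε := by
        rw [hc]; push_cast; ring
      have key := hpos (m₁ + 3 * j)
        (by
          rw [heq1]
          have h0 : (0 : ℝ) ≤ 3 * (j : ℝ) * ε := by positivity
          linarith)
        (by
          rw [hd]
          exact mul_lt_mul_of_pos_right (by exact_mod_cast hmlt) hε)
      rw [heq1, heq2] at key
      have hne : (X ∩ Set.Icc (c + 3 * j * ε) (c + (3 * j + 1) * ε)).Nonempty := by
        by_contra hcon
        rw [Set.not_nonempty_iff_eq_empty] at hcon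
        have hsub : Set.Icc (c + 3 * j * ε) (c + (3 * j + 1) * ε) ⊆ Xᶜ := by
          intro y hy hyX
          exact absurd (Set.mem_inter hyX hy) (by rw [hcon]; exact id)
        have := (measure_mono hsub).trans_eq hsupp
        exact absurd this (by simpa using key.ne')
      obtain ⟨x, hxX, hx⟩ := hne
      exact ⟨x, fun _ => ⟨hxX, hx.1, hx.2⟩⟩
    · exact ⟨c, fun h => absurd h hj⟩
  choose p hp using hpt
  set s : ℕ → Set ℝ := fun j => Set.Icc (p j - ε / 2) (p j + ε / 2) with hsdef
  -- disjointness
  have hdisj : (↑(Finset.range M) : Set ℕ).PairwiseDisjoint s := by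
    intro i hi j hj hij
    simp only [Finset.coe_range, Set.mem_Iio] at hi hj
    have key : ∀ a b : ℕ, a < b → b < M → Disjoint (s a) (s b) := by
      intro a b hab hbM
      obtain ⟨hXa, ha1, ha2⟩ := hp a (hab.trans hbM)
      obtain ⟨hXb, hb1, hb2⟩ := hp b hbM
      rw [Set.disjoint_left]
      intro y hy1 hy2
      simp only [hsdef, Set.mem_Icc] at hy1 hy2
      have hab' : (3 : ℝ) * a + 3 ≤ 3 * b := by
        have : a + 1 ≤ b := hab
        have : ((a : ℝ) + 1) ≤ b := by exact_mod_cast this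
        linarith
      have hprod : (3 * (a : ℝ) + 3) * ε ≤ 3 * (b : ℝ) * ε := by
        have : (3 : ℝ) * a + 3 ≤ 3 * b := hab'
        exact mul_le_mul_of_nonneg_right this hε.le
      linarith [hy1.2, hy2.1, ha2, hb1, hε]
    rcases lt_or_gt_of_ne hij with h | h
    · exact key i j h hj
    · exact (key j i h hi).symm
  -- union subset
  have hsub : ∀ j ∈ Finset.range M, s j ⊆ Set.Icc (c - ε) (d + ε) := by
    intro j hj
    rw [Finset.mem_range] at hj
    obtain ⟨hXj, h1, h2⟩ := hp j hj
    have h3jN : (3 : ℝ) * j + 1 ≤ N := by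
      have : 3 * j + 1 ≤ N := by omega
      exact_mod_cast this
    intro y hy
    simp only [hsdef, Set.mem_Icc] at hy ⊢
    have hprod : (3 * (j : ℝ) + 1) * ε ≤ (N : ℝ) * ε :=
      mul_le_mul_of_nonneg_right h3jN hε.le
    have h0 : (0 : ℝ) ≤ 3 * (j : ℝ) * ε := by positivity
    constructor
    · linarith [hy.1]
    · linarith [hy.2, hNε, hε]
  -- measure of enlarged interval
  have henl : μX (Set.Icc (c - ε) (d + ε)) = μX (Set.Icc c d) := by
    apply le_antisymm
    · have hcover : Set.Icc (c - ε) (d + ε) ⊆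
          Set.Icc (c - ε) c ∪ Set.Icc c d ∪ Set.Icc d (d + ε) := by
        intro y hy
        rcases le_total y c with h | h
        · exact Or.inl (Or.inl ⟨hy.1, h⟩)
        rcases le_total y d with h' | h'
        · exact Or.inl (Or.inr ⟨h, h'⟩)
        · exact Or.inr ⟨h', hy.2⟩
      calc μX (Set.Icc (c - ε) (d + ε))
          ≤ μX (Set.Icc (c - ε) c ∪ Set.Icc c d ∪ Set.Icc d (d + ε)) := measure_mono hcover
        _ ≤ μX (Set.Icc (c - ε) c ∪ Set.Icc c d) + μX (Set.Icc d (d + ε)) := measure_union_le _ _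
        _ ≤ μX (Set.Icc (c - ε) c) + μX (Set.Icc c d) + μX (Set.Icc d (d + ε)) := by
            gcongr; exact measure_union_le _ _
        _ = μX (Set.Icc c d) := by rw [hleft, hright]; simp
    · exact measure_mono (Set.Icc_subset_Icc (by linarith) (by linarith))
  -- key sum lower bound
  have hsum : ENNReal.ofReal ((M : ℝ) * (C_R⁻¹ * ε ^ δ)) ≤ μX (Set.Icc c d) := by
    have hεδpos : (0 : ℝ) < ε ^ δ := Real.rpow_pos_of_pos hε δ
    calc ENNReal.ofReal ((M : ℝ) * (C_R⁻¹ * ε ^ δ))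
        = (M : ENNReal) * ENNReal.ofReal (C_R⁻¹ * ε ^ δ) := by
          rw [ENNReal.ofReal_mul (by positivity)]
          congr 1
          simp [ENNReal.ofReal_natCast]
      _ = ∑ j ∈ Finset.range M, ENNReal.ofReal (C_R⁻¹ * ε ^ δ) := by
          rw [Finset.sum_const, Finset.card_range, nsmul_eq_mul]
      _ ≤ ∑ j ∈ Finset.range M, μX (s j) := by
          apply Finset.sum_le_sum
          intro j hj
          rw [Finset.mem_range] at hj
          exact ball (p j) (hp j hj).1
      _ = μX (⋃ j ∈ Finset.range M, s j) :=
          (measure_biUnion_finset hdisj (fun j _ => measurableSet_Icc)).symm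
      _ ≤ μX (Set.Icc (c - ε) (d + ε)) := measure_mono (Set.iUnion₂_subset hsub)
      _ = μX (Set.Icc c d) := henl
  -- upper regularity bound
  have hεdc : ε ≤ d - c := by
    have h1N : (1 : ℝ) ≤ (N : ℝ) := by exact_mod_cast hN1
    have := mul_le_mul_of_nonneg_right h1N hε.le
    rw [one_mul] at this
    linarith [hNε]
  have hup : μX (Set.Icc c d) ≤ ENNReal.ofReal (C_R * (d - c) ^ δ) :=
    hreg.1 c d (hhε.trans hεdc)
  -- extract real inequality
  have hdc0 : (0 : ℝ) < d - c := by linarith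
  have hreal : (M : ℝ) * (C_R⁻¹ * ε ^ δ) ≤ C_R * (d - c) ^ δ := by
    have := hsum.trans hup
    rwa [ENNReal.ofReal_le_ofReal_iff (by positivity)] at this
  -- N ≤ 3 C_R^2 N^δ
  have hN0 : (0 : ℝ) < (N : ℝ) := by exact_mod_cast hN1
  have hdcδ : (d - c) ^ δ = (N : ℝ) ^ δ * ε ^ δ := by
    rw [← hNε, Real.mul_rpow hN0.le hε.le]
  have hεδpos : (0 : ℝ) < ε ^ δ := Real.rpow_pos_of_pos hε δ
  have hNδpos : (0 : ℝ) < (N : ℝ) ^ δ := Real.rpow_pos_of_pos hN0 δ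
  have hMle : (M : ℝ) ≤ C_R ^ 2 * (N : ℝ) ^ δ := by
    rw [hdcδ] at hreal
    have h1 : (M : ℝ) * C_R⁻¹ ≤ C_R * (N : ℝ) ^ δ := by
      have := mul_le_mul_of_nonneg_right hreal (le_of_lt (inv_pos.mpr hεδpos))
      calc (M : ℝ) * C_R⁻¹ = (M : ℝ) * (C_R⁻¹ * ε ^ δ) * (ε ^ δ)⁻¹ := by
            field_simp
        _ ≤ C_R * ((N : ℝ) ^ δ * ε ^ δ) * (ε ^ δ)⁻¹ := this
        _ = C_R * (N : ℝ) ^ δ := by field_simp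
    calc (M : ℝ) = (M : ℝ) * C_R⁻¹ * C_R := by field_simp
      _ ≤ C_R * (N : ℝ) ^ δ * C_R := by
          apply mul_le_mul_of_nonneg_right h1 hC0.le
      _ = C_R ^ 2 * (N : ℝ) ^ δ := by ring
  have hNle : (N : ℝ) ≤ 3 * C_R ^ 2 * (N : ℝ) ^ δ := by
    have h3M : (N : ℝ) ≤ 3 * M := by exact_mod_cast hN3M
    linarith
  -- N^{1-δ} ≤ 3 C_R^2
  have hpow : (N : ℝ) ^ (1 - δ) ≤ 3 * C_R ^ 2 := by
    have hmul : (N : ℝ) ^ (1 - δ) * (N : ℝ) ^ δ = (N : ℝ) := by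
      rw [← Real.rpow_add hN0]
      norm_num
    have : (N : ℝ) ^ (1 - δ) * (N : ℝ) ^ δ ≤ 3 * C_R ^ 2 * (N : ℝ) ^ δ := by
      rw [hmul]; exact hNle
    exact le_of_mul_le_mul_right this hNδpos
  -- N ≤ C_R'
  have h1δ : (0 : ℝ) < 1 - δ := by linarith
  have hNfinal : (N : ℝ) ≤ (3 * C_R ^ 2) ^ ((1 : ℝ) / (1 - δ)) := by
    have h := Real.rpow_le_rpow (Real.rpow_nonneg hN0.le _) hpow
      (le_of_lt (by positivity : (0 : ℝ) < 1 / (1 - δ)))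
    rwa [← Real.rpow_mul hN0.le,
      show (1 - δ) * ((1 : ℝ) / (1 - δ)) = 1 by field_simp, Real.rpow_one] at h
  have hCR'1 : (1 : ℝ) ≤ (3 * C_R ^ 2) ^ ((1 : ℝ) / (1 - δ)) :=
    le_trans (by exact_mod_cast hN1) hNfinal
  have hlen : d - c ≤ (3 * C_R ^ 2) ^ ((1 : ℝ) / (1 - δ)) * ε := by
    rw [← hNε]
    exact mul_le_mul_of_nonneg_right hNfinal hε.le
  -- ε^δ in rpow form
  have hεδeq : ε ^ δ = (L : ℝ) ^ (-(δ * k)) := by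
    have hL0 : (0 : ℝ) ≤ (L : ℝ) := by linarith
    rw [hεdef, ← Real.rpow_intCast (L : ℝ) (-(k : ℤ)), ← Real.rpow_mul hL0]
    congr 1
    push_cast
    ring
  refine ⟨⟨hεdc, hlen⟩, ?_, ?_⟩
  · -- measure lower bound
    calc ENNReal.ofReal (C_R⁻¹ * (L : ℝ) ^ (-(δ * k)))
        = ENNReal.ofReal (C_R⁻¹ * ε ^ δ) := by rw [hεδeq]
      _ ≤ ENNReal.ofReal ((M : ℝ) * (C_R⁻¹ * ε ^ δ)) := by
          apply ENNReal.ofReal_le_ofReal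
          exact le_mul_of_one_le_left (by positivity) (by exact_mod_cast hM1)
      _ ≤ μX (Set.Icc c d) := hsum
  · -- measure upper bound
    refine hup.trans (ENNReal.ofReal_le_ofReal ?_)
    have hdcle : (d - c) ^ δ ≤ ((3 * C_R ^ 2) ^ ((1 : ℝ) / (1 - δ))) ^ δ * ε ^ δ := by
      rw [← Real.mul_rpow (by positivity) hε.le]
      exact Real.rpow_le_rpow hdc0.le hlen hδ0.le
    calc C_R * (d - c) ^ δ
        ≤ C_R * (((3 * C_R ^ 2) ^ ((1 : ℝ) / (1 - δ))) ^ δ * ε ^ δ) := by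
          exact mul_le_mul_of_nonneg_left hdcle hC0.le
      _ = C_R * ((3 * C_R ^ 2) ^ ((1 : ℝ) / (1 - δ))) ^ δ * (L : ℝ) ^ (-(δ * k)) := by
          rw [← hεδeq]; ring
end

section
/- In the setting of the base-L discretization of a measure μ_X that is δ-regular up to scale L^{−K} with constant C_R (0 < δ < 1), if I' is a child of a tree interval I with 0 ≤ H(I) < K, then μ_X(I')/μ_X(I) ≥ L^{−δ}/C_R', where C_R' = (3C_R²)^{1/(1−δ)}. -/
/-! An interval `I = [c, d] ∈ V_k` is a union of `n` cells of length `ℓ = L^{-k}` of positive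
measure, each containing a point of `X` (as `μ` is carried by `X`). The disjoint balls of radius
`ℓ / 2` around the points in every third cell give `⌈n / 3⌉ C⁻¹ ℓ^δ ≤ μ(I) ≤ C (n ℓ)^δ`, hence
`n ≤ P := (3C²)^{1/(1-δ)}` and `μ(I) ≤ C (P ℓ)^δ`. Since the neighbouring cells of `I' ∈ V_{k+1}`
are null, the ball of radius `ℓ / (2L)` around a point of `X` in its first cell gives
`μ(I') ≥ C⁻¹ (ℓ / L)^δ`. The ratio is then at least `L^{-δ} / (C² P^δ) ≥ L^{-δ} / P`, because
`P^{1-δ} = 3C²`. -/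

open MeasureTheory

open Set

lemma exists_mem_of_measure_compl_eq_zero {α : Type*} [MeasurableSpace α] {μ : Measure α}
    {X S : Set α} (hX : μ Xᶜ = 0) (hS : 0 < μ S) : ∃ x ∈ S, x ∈ X :=
  nonempty_of_measure_ne_zero ((measure_inter_conull hX).trans_ne hS.ne')

lemma measure_Icc_eq_of_null_sides {μ : Measure ℝ} {a b c d : ℝ} (hac : a ≤ c) (hcd : c ≤ d)
    (hdb : d ≤ b) (hl : μ (Icc a c) = 0) (hr : μ (Icc d b) = 0) :
    μ (Icc a b) = μ (Icc c d) := by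
  refine le_antisymm ?_ (measure_mono (Icc_subset_Icc hac hdb))
  calc μ (Icc a b) = μ (Icc a c ∪ Icc c d ∪ Icc d b) := by
        rw [Icc_union_Icc_eq_Icc hac hcd, Icc_union_Icc_eq_Icc (hac.trans hcd) hdb]
    _ ≤ μ (Icc a c) + μ (Icc c d) + μ (Icc d b) :=
        (measure_union_le _ _).trans (add_le_add_left (measure_union_le _ _) _)
    _ = μ (Icc c d) := by rw [hl, hr, zero_add, add_zero]

lemma le_rpow_one_div_one_sub_of_le_mul_rpow {x A δ : ℝ} (hx : 0 < x) (hδ : δ < 1)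
    (h : x ≤ A * x ^ δ) : x ≤ A ^ (1 / (1 - δ)) := by
  have hxδ : x ^ (1 - δ) ≤ A := by
    rw [Real.rpow_sub hx, Real.rpow_one, div_le_iff₀ (Real.rpow_pos_of_pos hx δ)]
    exact h
  calc x = (x ^ (1 - δ)) ^ (1 / (1 - δ)) := by
        rw [← Real.rpow_mul hx.le, mul_one_div_cancel (by linarith), Real.rpow_one]
    _ ≤ A ^ (1 / (1 - δ)) :=
        Real.rpow_le_rpow (Real.rpow_nonneg hx.le _) hxδ (by rw [one_div_nonneg]; linarith)

lemma mul_rpow_one_div_one_sub_rpow {A δ : ℝ} (hA : 0 < A) (hδ : δ < 1) :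
    A * (A ^ (1 / (1 - δ))) ^ δ = A ^ (1 / (1 - δ)) := by
  have h1δ : 1 - δ ≠ 0 := by linarith
  rw [← Real.rpow_mul hA.le]
  conv_lhs => lhs; rw [← Real.rpow_one A]
  rw [← Real.rpow_add hA]
  congr 1
  field_simp
  ring

lemma mul_rpow_div_le_inv_mul_rpow {C δ ℓ : ℝ} (hC : 0 < C) (hδ : δ < 1) (hℓ : 0 ≤ ℓ) :
    C * ((3 * C ^ 2) ^ (1 / (1 - δ)) * ℓ) ^ δ / (3 * C ^ 2) ^ (1 / (1 - δ)) ≤ C⁻¹ * ℓ ^ δ := by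
  set P := (3 * C ^ 2) ^ (1 / (1 - δ))
  have hP : 0 < P := by positivity
  have hAP : 3 * C ^ 2 * P ^ δ = P := mul_rpow_one_div_one_sub_rpow (by positivity) hδ
  have hCPℓ : 0 ≤ C * (P ^ δ * ℓ ^ δ) := by positivity
  rw [Real.mul_rpow hP.le hℓ, div_le_iff₀ hP]
  calc C * (P ^ δ * ℓ ^ δ) ≤ 3 * C * (P ^ δ * ℓ ^ δ) := by linarith
    _ = C⁻¹ * ℓ ^ δ * (3 * C ^ 2 * P ^ δ) := by field_simp
    _ = C⁻¹ * ℓ ^ δ * P := by rw [hAP]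

lemma zpow_neg_natCast_succ_rpow {L : ℝ} (hL : 0 < L) (k : ℕ) (δ : ℝ) :
    (L ^ (-((k + 1 : ℕ) : ℤ))) ^ δ = L ^ (-δ) * (L ^ (-(k : ℤ))) ^ δ := by
  rw [show -((k + 1 : ℕ) : ℤ) = -(k : ℤ) + -1 by push_cast; ring, zpow_add₀ hL.ne', zpow_neg_one,
    Real.mul_rpow (zpow_nonneg hL.le _) (inv_nonneg.2 hL.le), Real.inv_rpow hL.le,
    ← Real.rpow_neg hL.le, mul_comm]

namespace IsDeltaRegular

variable {X : Set ℝ} {μ : Measure ℝ} {δ C h : ℝ}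

lemma exists_le_measure_Icc_of_pos (hreg : IsDeltaRegular X μ δ C h) (hX : μ Xᶜ = 0)
    {a ℓ : ℝ} (hhℓ : h ≤ ℓ) (hℓ : ℓ ≤ 1) (hpos : 0 < μ (Icc a (a + ℓ))) :
    ∃ x ∈ Icc a (a + ℓ), ENNReal.ofReal (C⁻¹ * ℓ ^ δ) ≤ μ (Icc (x - ℓ / 2) (x + ℓ / 2)) := by
  obtain ⟨x, hxI, hxX⟩ := exists_mem_of_measure_compl_eq_zero hX hpos
  have hball := hreg.2 x (ℓ / 2) hxX (by linarith) (by linarith)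
  rw [mul_div_cancel₀ ℓ two_ne_zero] at hball
  exact ⟨x, hxI, hball⟩

lemma natCast_mul_le_measure_Icc (hreg : IsDeltaRegular X μ δ C h) (hX : μ Xᶜ = 0)
    {c ℓ : ℝ} (hℓ0 : 0 < ℓ) (hhℓ : h ≤ ℓ) (hℓ : ℓ ≤ 1) {n N : ℕ} (hN : 3 * N ≤ n + 2)
    (hcells : ∀ i < n, 0 < μ (Icc (c + i * ℓ) (c + (i + 1) * ℓ))) :
    N * ENNReal.ofReal (C⁻¹ * ℓ ^ δ) ≤ μ (Icc (c - ℓ) (c + n * ℓ + ℓ)) := by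
  have hpts : ∀ m ∈ Finset.range N, ∃ x ∈ Icc (c + 3 * m * ℓ) (c + 3 * m * ℓ + ℓ),
      ENNReal.ofReal (C⁻¹ * ℓ ^ δ) ≤ μ (Icc (x - ℓ / 2) (x + ℓ / 2)) := by
    intro m hm
    have hcell := hcells (3 * m) (by rw [Finset.mem_range] at hm; omega)
    push_cast at hcell
    rw [add_one_mul, ← add_assoc] at hcell
    exact hreg.exists_le_measure_Icc_of_pos hX hhℓ hℓ hcell
  choose! x hxI hx using hpts
  have hdisj : (↑(Finset.range N) : Set ℕ).PairwiseDisjoint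
      (fun m ↦ Icc (x m - ℓ / 2) (x m + ℓ / 2)) := by
    intro m hm m' hm' hne
    refine Set.disjoint_left.2 fun y hy hy' ↦ ?_
    have h₁ := hxI m hm
    have h₂ := hxI m' hm'
    rcases Nat.lt_or_gt_of_ne hne with hlt | hlt
    · have : ((m : ℝ) + 1) * ℓ ≤ m' * ℓ := by gcongr; exact_mod_cast hlt
      linarith [hy.2, hy'.1, h₁.2, h₂.1]
    · have : ((m' : ℝ) + 1) * ℓ ≤ m * ℓ := by gcongr; exact_mod_cast hlt
      linarith [hy.1, hy'.2, h₁.1, h₂.2]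
  have hsub : ∀ m ∈ Finset.range N,
      Icc (x m - ℓ / 2) (x m + ℓ / 2) ⊆ Icc (c - ℓ) (c + n * ℓ + ℓ) := by
    intro m hm
    have hxm := hxI m hm
    have : ((3 * m : ℝ) + 1) * ℓ ≤ n * ℓ := by
      gcongr; exact_mod_cast (by rw [Finset.mem_range] at hm; omega : 3 * m + 1 ≤ n)
    have : (0 : ℝ) ≤ 3 * m * ℓ := by positivity
    exact Icc_subset_Icc (by linarith [hxm.1]) (by linarith [hxm.2])
  calc (N : ENNReal) * ENNReal.ofReal (C⁻¹ * ℓ ^ δ)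
      = (Finset.range N).card • ENNReal.ofReal (C⁻¹ * ℓ ^ δ) := by
        rw [Finset.card_range, nsmul_eq_mul]
    _ ≤ ∑ m ∈ Finset.range N, μ (Icc (x m - ℓ / 2) (x m + ℓ / 2)) :=
        Finset.card_nsmul_le_sum _ _ _ hx
    _ = μ (⋃ m ∈ Finset.range N, Icc (x m - ℓ / 2) (x m + ℓ / 2)) :=
        (measure_biUnion_finset hdisj fun _ _ ↦ measurableSet_Icc).symm
    _ ≤ μ (Icc (c - ℓ) (c + n * ℓ + ℓ)) := measure_mono (iUnion₂_subset hsub)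

lemma natCast_le_of_cells (hreg : IsDeltaRegular X μ δ C h) (hX : μ Xᶜ = 0) (hδ : δ < 1)
    (hC : 0 < C) {c ℓ : ℝ} (hℓ0 : 0 < ℓ) (hhℓ : h ≤ ℓ) (hℓ : ℓ ≤ 1) {n : ℕ} (hn : 0 < n)
    (hcells : ∀ i < n, 0 < μ (Icc (c + i * ℓ) (c + (i + 1) * ℓ)))
    (hup : μ (Icc (c - ℓ) (c + n * ℓ + ℓ)) ≤ ENNReal.ofReal (C * (n * ℓ) ^ δ)) :
    (n : ℝ) ≤ (3 * C ^ 2) ^ (1 / (1 - δ)) := by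
  have hn0 : (0 : ℝ) < n := by exact_mod_cast hn
  have hℓδ : 0 < ℓ ^ δ := Real.rpow_pos_of_pos hℓ0 δ
  set N := (n + 2) / 3
  have hsum : (N : ℝ) * (C⁻¹ * ℓ ^ δ) ≤ C * (n ^ δ * ℓ ^ δ) := by
    rw [← Real.mul_rpow hn0.le hℓ0.le, ← ENNReal.ofReal_le_ofReal_iff (by positivity),
      ENNReal.ofReal_mul (Nat.cast_nonneg _), ENNReal.ofReal_natCast]
    exact (hreg.natCast_mul_le_measure_Icc hX hℓ0 hhℓ hℓ (by omega) hcells).trans hup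
  have hN : (N : ℝ) ≤ C ^ 2 * n ^ δ := by
    refine le_of_mul_le_mul_right ?_ hℓδ
    calc (N : ℝ) * ℓ ^ δ = C * (N * (C⁻¹ * ℓ ^ δ)) := by field_simp
      _ ≤ C * (C * (n ^ δ * ℓ ^ δ)) := by gcongr
      _ = C ^ 2 * n ^ δ * ℓ ^ δ := by ring
  have h3N : (n : ℝ) ≤ 3 * N := by exact_mod_cast (by omega : n ≤ 3 * N)
  exact le_rpow_one_div_one_sub_of_le_mul_rpow hn0 hδ (by linarith)

end IsDeltaRegular

namespace MemVk

variable {μ : Measure ℝ} {L k : ℕ} {c d : ℝ}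

lemma zpow_pos (hI : MemVk μ L k c d) : 0 < (L : ℝ) ^ (-(k : ℤ)) := by
  obtain ⟨⟨m₀, rfl⟩, ⟨m₁, rfl⟩, hlt, -⟩ := hI
  refine (zpow_nonneg (Nat.cast_nonneg L) _).lt_of_ne fun h ↦ ?_
  rw [← h, mul_zero, mul_zero] at hlt
  exact hlt.false

lemma exists_eq_add_natCast_mul (hI : MemVk μ L k c d) :
    ∃ n : ℕ, 0 < n ∧ d = c + n * (L : ℝ) ^ (-(k : ℤ)) ∧
      ∀ i < n, 0 < μ (Icc (c + i * (L : ℝ) ^ (-(k : ℤ))) (c + (i + 1) * (L : ℝ) ^ (-(k : ℤ)))) := by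
  have hℓ := hI.zpow_pos
  obtain ⟨⟨m₀, rfl⟩, ⟨m₁, rfl⟩, hlt, hcells, -⟩ := hI
  have hm : m₀ < m₁ := by exact_mod_cast lt_of_mul_lt_mul_right hlt hℓ.le
  refine ⟨(m₁ - m₀).toNat, by omega, ?_, fun i hi ↦ ?_⟩
  · rw [show (((m₁ - m₀).toNat : ℕ) : ℝ) = m₁ - m₀ by exact_mod_cast Int.toNat_of_nonneg (by omega)]
    ring
  · have hi' : (i : ℝ) + 1 ≤ m₁ - m₀ := by
      exact_mod_cast (by omega : (i : ℤ) + 1 ≤ m₁ - m₀)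
    have hcell := hcells (m₀ + i) (by push_cast; nlinarith [(Nat.cast_nonneg i : (0 : ℝ) ≤ i)])
      (by push_cast; nlinarith)
    push_cast at hcell
    simpa only [add_mul, add_assoc] using hcell

lemma measure_Icc_sub_add (hI : MemVk μ L k c d) :
    μ (Icc (c - (L : ℝ) ^ (-(k : ℤ))) (d + (L : ℝ) ^ (-(k : ℤ)))) = μ (Icc c d) := by
  have hℓ := hI.zpow_pos
  exact measure_Icc_eq_of_null_sides (by linarith) hI.2.2.1.le (by linarith) hI.2.2.2.2.1
    hI.2.2.2.2.2

variable {X : Set ℝ} {δ C h : ℝ}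

lemma ofReal_le_measure (hI : MemVk μ L k c d) (hreg : IsDeltaRegular X μ δ C h)
    (hX : μ Xᶜ = 0) (hL : (1 : ℝ) ≤ L) (hh : h ≤ (L : ℝ) ^ (-(k : ℤ))) :
    ENNReal.ofReal (C⁻¹ * ((L : ℝ) ^ (-(k : ℤ))) ^ δ) ≤ μ (Icc c d) := by
  have hℓ := hI.zpow_pos
  obtain ⟨n, hn, hd, hcells⟩ := hI.exists_eq_add_natCast_mul
  have hcell := hcells 0 hn
  rw [Nat.cast_zero, zero_mul, add_zero, zero_add, one_mul] at hcell
  obtain ⟨x, hxI, hball⟩ := hreg.exists_le_measure_Icc_of_pos hX hh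
    (zpow_le_one_of_nonpos₀ hL (by omega)) hcell
  have hcd : c + (L : ℝ) ^ (-(k : ℤ)) ≤ d := by
    have hn1 : (1 : ℝ) ≤ n := by exact_mod_cast hn
    rw [hd]; nlinarith
  rw [← hI.measure_Icc_sub_add]
  exact hball.trans (measure_mono (Icc_subset_Icc (by linarith [hxI.1]) (by linarith [hxI.2])))

lemma measure_le (hI : MemVk μ L k c d) (hreg : IsDeltaRegular X μ δ C h) (hX : μ Xᶜ = 0)
    (hL : (1 : ℝ) ≤ L) (hh : h ≤ (L : ℝ) ^ (-(k : ℤ))) (hδ0 : 0 ≤ δ) (hδ1 : δ < 1) (hC : 0 < C) :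
    μ (Icc c d) ≤
      ENNReal.ofReal (C * ((3 * C ^ 2) ^ (1 / (1 - δ)) * (L : ℝ) ^ (-(k : ℤ))) ^ δ) := by
  have hℓ := hI.zpow_pos
  obtain ⟨n, hn, hd, hcells⟩ := hI.exists_eq_add_natCast_mul
  have hn1 : (1 : ℝ) ≤ n := by exact_mod_cast hn
  have hup : μ (Icc c d) ≤ ENNReal.ofReal (C * (n * (L : ℝ) ^ (-(k : ℤ))) ^ δ) := by
    simpa only [hd, add_sub_cancel_left] using
      hreg.1 c d (by rw [hd, add_sub_cancel_left]; nlinarith)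
  have hnP := hreg.natCast_le_of_cells hX hδ1 hC hℓ hh (zpow_le_one_of_nonpos₀ hL (by omega)) hn
    hcells (by rw [← hd, hI.measure_Icc_sub_add]; exact hup)
  refine hup.trans (ENNReal.ofReal_le_ofReal ?_)
  gcongr

end MemVk

theorem stmt17_general (X : Set ℝ) (μX : Measure ℝ) (δ C_R : ℝ) (L K : ℕ)
    (hL : 2 ≤ L) (hδ0 : 0 < δ) (hδ1 : δ < 1) (hC : 1 ≤ C_R)
    (hsupp : μX Xᶜ = 0)
    (hreg : IsDeltaRegular X μX δ C_R ((L : ℝ) ^ (-(K : ℤ))))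
    (k : ℕ) (hk : k < K) (c d c' d' : ℝ)
    (hI : MemVk μX L k c d) (hI' : MemVk μX L (k + 1) c' d') :
    ENNReal.ofReal ((L : ℝ) ^ (-δ) / (3 * C_R ^ 2) ^ ((1 : ℝ) / (1 - δ))) *
        μX (Set.Icc c d) ≤ μX (Set.Icc c' d') := by
  have hL1 : (1 : ℝ) ≤ L := by exact_mod_cast (by omega : 1 ≤ L)
  have hC0 : 0 < C_R := by linarith
  have hup := hI.measure_le hreg hsupp hL1 (zpow_le_zpow_right₀ hL1 (by omega)) hδ0.le hδ1 hC0
  have hlow := hI'.ofReal_le_measure hreg hsupp hL1 (zpow_le_zpow_right₀ hL1 (by omega))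
  rw [zpow_neg_natCast_succ_rpow (by linarith) k δ, mul_left_comm] at hlow
  set ℓ := (L : ℝ) ^ (-(k : ℤ))
  set P := (3 * C_R ^ 2) ^ ((1 : ℝ) / (1 - δ))
  calc ENNReal.ofReal ((L : ℝ) ^ (-δ) / P) * μX (Icc c d)
      ≤ ENNReal.ofReal ((L : ℝ) ^ (-δ) / P) * ENNReal.ofReal (C_R * (P * ℓ) ^ δ) := by gcongr
    _ = ENNReal.ofReal ((L : ℝ) ^ (-δ) * (C_R * (P * ℓ) ^ δ / P)) := by
        rw [← ENNReal.ofReal_mul (by positivity), div_mul_eq_mul_div, mul_div_assoc]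
    _ ≤ ENNReal.ofReal ((L : ℝ) ^ (-δ) * (C_R⁻¹ * ℓ ^ δ)) := by
        gcongr
        exact mul_rpow_div_le_inv_mul_rpow hC0 hδ1 hI.zpow_pos.le
    _ ≤ μX (Icc c' d') := hlow

theorem stmt17 (X : Set ℝ) (μX : Measure ℝ) (δ C_R : ℝ) (L K : ℕ)
    (hL : 2 ≤ L) (hK : 0 < K) (hδ0 : 0 < δ) (hδ1 : δ < 1) (hC : 1 ≤ C_R)
    (hX : IsCompact X) [IsFiniteMeasure μX] (hsupp : μX Xᶜ = 0)
    (hreg : IsDeltaRegular X μX δ C_R ((L : ℝ) ^ (-(K : ℤ))))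
    (k : ℕ) (hk : k < K) (c d c' d' : ℝ)
    (hI : MemVk μX L k c d) (hI' : MemVk μX L (k + 1) c' d')
    (hsub : Set.Icc c' d' ⊆ Set.Icc c d) :
    ENNReal.ofReal ((L : ℝ) ^ (-δ) / (3 * C_R ^ 2) ^ ((1 : ℝ) / (1 - δ))) *
        μX (Set.Icc c d) ≤ μX (Set.Icc c' d') :=
  stmt17_general X μX δ C_R L K hL hδ0 hδ1 hC hsupp hreg k hk c d c' d' hI hI'
end
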